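/- arXiv:2102.12803 — 7 statements merged into one kernel-verified Lean document; each statement's English description precedes it below -/
import Mathlib

section
/- Let f ≥ 2 and let T = SL(2, GF(2^f)). For every non-identity element x of T, the centralizer C_T(x) is an abelian (commutative) subgroup of T. -/
/-!
A non-scalar `2 × 2` matrix `x` over a field is cyclic, so every matrix commuting with `x` is of
the form `α + β x`, and any two such matrices commute. Concretely, up to sign the entries of the
commutator `x a - a x` form the cross product of the coordinates `(x₀₁, x₁₀, x₀₀ - x₁₁)` and
`(a₀₁, a₁₀, a₀₀ - a₁₁)` of `x` and `a` modulo scalars, so it vanishes only if `a ≡ β x` modulo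
scalars. In characteristic `2` the only scalar matrix of determinant `1` is the identity, since
`c ^ 2 = 1` forces `c = 1`; hence every `x ≠ 1` in `SL(2, 2^f)` is non-scalar.
-/

namespace Matrix

section CommRing

variable {R : Type*} [CommRing R]

def nonscalarCoords : Matrix (Fin 2) (Fin 2) R →ₗ[R] Fin 3 → R where
  toFun x := ![x 0 1, x 1 0, x 0 0 - x 1 1]
  map_add' x y := by ext i; fin_cases i <;> simp [sub_add_sub_comm]
  map_smul' c x := by ext i; fin_cases i <;> simp [mul_sub]

lemma nonscalarCoords_apply (x : Matrix (Fin 2) (Fin 2) R) :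
    nonscalarCoords x = ![x 0 1, x 1 0, x 0 0 - x 1 1] :=
  rfl

lemma nonscalarCoords_eq_zero_iff {x : Matrix (Fin 2) (Fin 2) R} :
    nonscalarCoords x = 0 ↔ x ∈ Set.range (scalar (Fin 2)) := by
  rw [nonscalarCoords_apply]
  simp only [cons_eq_zero_iff, zero_empty, and_true, sub_eq_zero]
  constructor
  · rintro ⟨h01, h10, hd⟩
    refine ⟨x 0 0, ?_⟩
    ext i j; fin_cases i <;> fin_cases j <;> simp [h01, h10, hd]
  · rintro ⟨c, rfl⟩
    simp

lemma cross_nonscalarCoords_eq_zero_of_commute {x a : Matrix (Fin 2) (Fin 2) R}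
    (h : Commute x a) : nonscalarCoords x ⨯₃ nonscalarCoords a = 0 := by
  have h' := fun i j => congrFun (congrFun h.eq i) j
  simp only [mul_apply, Fin.sum_univ_two] at h'
  rw [nonscalarCoords_apply, nonscalarCoords_apply, cross_apply]
  simp only [cons_val_zero, cons_val_one, cons_val, cons_eq_zero_iff, zero_empty, and_true]
  refine ⟨?_, ?_, ?_⟩
  · linear_combination h' 1 0
  · linear_combination h' 0 1
  · linear_combination h' 0 0

end CommRing

variable {K : Type*} [Field K]

lemma mem_adjoin_singleton_of_commute {x a : Matrix (Fin 2) (Fin 2) K}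
    (hx : x ∉ Set.range (scalar (Fin 2))) (h : Commute x a) : a ∈ Algebra.adjoin K {x} := by
  have hx' : nonscalarCoords x ≠ 0 := mt nonscalarCoords_eq_zero_iff.mp hx
  obtain ⟨β, hβ⟩ : ∃ β : K, β • nonscalarCoords x = nonscalarCoords a := by
    by_contra! hne
    exact (crossProduct_ne_zero_iff_linearIndependent.mpr
      ((LinearIndependent.pair_iff' hx').mpr hne)) (cross_nonscalarCoords_eq_zero_of_commute h)
  obtain ⟨α, hα⟩ : a - β • x ∈ Set.range (scalar (Fin 2)) := by
    rw [← nonscalarCoords_eq_zero_iff, map_sub, map_smul, hβ, sub_self]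
  rw [← sub_add_cancel a (β • x), ← hα]
  exact add_mem (Subalgebra.algebraMap_mem _ α)
    (Subalgebra.smul_mem _ (Algebra.self_mem_adjoin_singleton K x) β)

lemma commute_of_commute_of_notMem_range_scalar {x a b : Matrix (Fin 2) (Fin 2) K}
    (hx : x ∉ Set.range (scalar (Fin 2))) (ha : Commute x a) (hb : Commute x b) : Commute a b :=
  Algebra.commute_of_mem_adjoin_singleton_of_commute (mem_adjoin_singleton_of_commute hx hb) ha.symm

namespace SpecialLinearGroup

lemma coe_notMem_range_scalar_of_ne_one [CharP K 2] {x : SpecialLinearGroup (Fin 2) K}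
    (hx : x ≠ 1) : (x : Matrix (Fin 2) (Fin 2) K) ∉ Set.range (scalar (Fin 2)) := by
  rintro ⟨c, hc⟩
  have hc2 : c ^ 2 = 1 ^ 2 := by simpa [← hc] using x.prop
  apply hx
  ext : 1
  rw [← hc, CharTwo.sq_injective hc2]
  simp

end SpecialLinearGroup

end Matrix

theorem centralizer_abelian_SL2_general
    (f : ℕ)
    (x : Matrix.SpecialLinearGroup (Fin 2) (GaloisField 2 f)) (hx : x ≠ 1) :
    ∀ a ∈ Subgroup.centralizer ({x} : Set (Matrix.SpecialLinearGroup (Fin 2) (GaloisField 2 f))),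
      ∀ b ∈ Subgroup.centralizer ({x} : Set (Matrix.SpecialLinearGroup (Fin 2) (GaloisField 2 f))),
        a * b = b * a := by
  intro a ha b hb
  have hcomm {g : Matrix.SpecialLinearGroup (Fin 2) (GaloisField 2 f)}
      (hg : g ∈ Subgroup.centralizer {x}) :
      Commute (x : Matrix (Fin 2) (Fin 2) (GaloisField 2 f)) g :=
    (show Commute x g from (Subgroup.mem_centralizer_singleton_iff.mp hg).symm).map
      Matrix.SpecialLinearGroup.coeMonoidHom
  exact Subtype.ext (Matrix.commute_of_commute_of_notMem_range_scalar
    (Matrix.SpecialLinearGroup.coe_notMem_range_scalar_of_ne_one hx) (hcomm ha) (hcomm hb)).eq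

/-- For `f ≥ 2` and `T = SL(2, GF(2^f))` (identified with `PSL(2, 2^f)` since the
center is trivial), the centralizer of every non-identity element of `T` is abelian. -/
theorem centralizer_abelian_SL2
    (f : ℕ) (hf : 2 ≤ f)
    (x : Matrix.SpecialLinearGroup (Fin 2) (GaloisField 2 f)) (hx : x ≠ 1) :
    ∀ a ∈ Subgroup.centralizer ({x} : Set (Matrix.SpecialLinearGroup (Fin 2) (GaloisField 2 f))),
      ∀ b ∈ Subgroup.centralizer ({x} : Set (Matrix.SpecialLinearGroup (Fin 2) (GaloisField 2 f))),
        a * b = b * a :=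
  centralizer_abelian_SL2_general f x hx
end

section
/- For every f ≥ 2, the group SL(2, GF(2^f)) is a CT-group. -/
open Matrix

lemma exists_eq_smul_add_smul {K : Type*} [Field K]
    {A B : Matrix (Fin 2) (Fin 2) K}
    (hA : ¬ ∃ k : K, A = k • (1 : Matrix (Fin 2) (Fin 2) K))
    (hB : A * B = B * A) :
    ∃ x y : K, B = x • (1 : Matrix (Fin 2) (Fin 2) K) + y • A := by
  have e00 := congrFun (congrFun hB 0) 0
  have e01 := congrFun (congrFun hB 0) 1
  have e10 := congrFun (congrFun hB 1) 0
  simp only [Matrix.mul_apply, Fin.sum_univ_two] at e00 e01 e10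
  by_cases hq : A 0 1 ≠ 0
  · refine ⟨B 0 0 - B 0 1 * A 0 0 / A 0 1, B 0 1 / A 0 1, ?_⟩
    ext i j
    fin_cases i <;> fin_cases j <;>
      simp only [Matrix.add_apply, Matrix.smul_apply, Matrix.one_apply, smul_eq_mul,
        Fin.isValue, if_true, if_false, Fin.zero_eta, Fin.mk_one, ite_true, ite_false,
        one_ne_zero, zero_ne_one, mul_one, mul_zero, add_zero, zero_add] <;>
      field_simp <;>
      first
      | linear_combination e01
      | linear_combination e00 - e01
      | linear_combination e00
      | linear_combination e00 + e01
      | linear_combination -e01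
      | ring
  · push_neg at hq
    by_cases hr : A 1 0 ≠ 0
    · have hb01 : B 0 1 = 0 := by
        have h : B 0 1 * A 1 0 = 0 := by rw [hq] at e00; linear_combination -e00
        exact (mul_eq_zero.mp h).resolve_right hr
      refine ⟨B 0 0 - B 1 0 * A 0 0 / A 1 0, B 1 0 / A 1 0, ?_⟩
      ext i j
      fin_cases i <;> fin_cases j <;>
        simp only [Matrix.add_apply, Matrix.smul_apply, Matrix.one_apply, smul_eq_mul,
          Fin.isValue, Fin.zero_eta, Fin.mk_one, ite_true, ite_false, if_true, if_false,
          one_ne_zero, zero_ne_one, mul_one, mul_zero, add_zero, zero_add, hq, hb01] <;>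
        field_simp <;>
        first
        | linear_combination e10
        | linear_combination e00
        | linear_combination -e10
        | linear_combination e00 - e10
        | linear_combination e00 + e10
        | ring
    · push_neg at hr
      have hps : A 0 0 - A 1 1 ≠ 0 := by
        intro h
        have h' := sub_eq_zero.mp h
        exact hA ⟨A 0 0, by ext i j; fin_cases i <;> fin_cases j <;>
          simp [Matrix.one_apply, hq, hr, h'.symm]⟩
      have hb01 : B 0 1 = 0 := by
        have h : B 0 1 * (A 0 0 - A 1 1) = 0 := by rw [hq] at e01; linear_combination e01
        exact (mul_eq_zero.mp h).resolve_right hps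
      have hb10 : B 1 0 = 0 := by
        have h : B 1 0 * (A 0 0 - A 1 1) = 0 := by rw [hr] at e10; linear_combination -e10
        exact (mul_eq_zero.mp h).resolve_right hps
      refine ⟨B 0 0 - (B 0 0 - B 1 1) / (A 0 0 - A 1 1) * A 0 0,
        (B 0 0 - B 1 1) / (A 0 0 - A 1 1), ?_⟩
      ext i j
      fin_cases i <;> fin_cases j <;>
        simp only [Matrix.add_apply, Matrix.smul_apply, Matrix.one_apply, smul_eq_mul,
          Fin.isValue, Fin.zero_eta, Fin.mk_one, ite_true, ite_false, if_true, if_false,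
          one_ne_zero, zero_ne_one, mul_one, mul_zero, add_zero, zero_add, hq, hr,
          hb01, hb10] <;>
        field_simp <;> ring
open Matrix

lemma nonscalar_of_ne_one {K : Type*} [Field K] [CharP K 2]
    (a : Matrix.SpecialLinearGroup (Fin 2) K) (ha : a ≠ 1) :
    ¬ ∃ k : K, (a : Matrix (Fin 2) (Fin 2) K) = k • (1 : Matrix (Fin 2) (Fin 2) K) := by
  rintro ⟨k, hk⟩
  have hdet : (a : Matrix (Fin 2) (Fin 2) K).det = 1 := a.property
  rw [hk, Matrix.det_smul, Matrix.det_one, mul_one] at hdet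
  simp only [Fintype.card_fin] at hdet
  have hk1 : k = 1 := by
    have h2 : (k - 1) ^ 2 = 0 := by
      have : (2 : K) = 0 := by exact_mod_cast CharP.cast_eq_zero K 2
      linear_combination hdet + (1 - k) * this
    have := pow_eq_zero_iff (n := 2) (by norm_num) |>.mp h2
    exact sub_eq_zero.mp this
  apply ha
  ext i j
  rw [hk, hk1, one_smul]
  rfl

/-- A group is a CT-group if commutativity is a transitive relation on its
non-identity elements. -/
def IsCTGroup (G : Type*) [Group G] : Prop :=
  ∀ a b c : G, a ≠ 1 → b ≠ 1 → c ≠ 1 → Commute a b → Commute b c → Commute a c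

/-- For every `f ≥ 2`, the group `SL(2, GF(2^f))` (identified with `PSL(2, 2^f)`)
is a CT-group. -/
theorem isCTGroup_SL2 (f : ℕ) (hf : 2 ≤ f) :
    IsCTGroup (Matrix.SpecialLinearGroup (Fin 2) (GaloisField 2 f)) := by
  set K := GaloisField 2 f
  intro a b c ha hb hc hab hbc
  have hB : ¬ ∃ k : K, (b : Matrix (Fin 2) (Fin 2) K) = k • 1 := nonscalar_of_ne_one b hb
  have hab' : (b : Matrix (Fin 2) (Fin 2) K) * a = a * b := by
    have := congrArg (Subtype.val) hab.eq
    simpa using this.symm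
  have hbc' : (b : Matrix (Fin 2) (Fin 2) K) * c = c * b := by
    have := congrArg (Subtype.val) hbc.eq
    simpa using this
  obtain ⟨x, y, hxy⟩ := exists_eq_smul_add_smul hB hab'
  obtain ⟨z, w, hzw⟩ := exists_eq_smul_add_smul hB hbc'
  have key : (a : Matrix (Fin 2) (Fin 2) K) * c = c * a := by
    rw [hxy, hzw]
    simp only [mul_add, add_mul, smul_mul_assoc, mul_smul_comm, smul_smul, smul_add,
      one_mul, mul_one]
    module
  have : a * c = c * a := Subtype.ext (by simpa using key)
  exact this
end

section
/- Let G be a finite group acting faithfully and primitively on a set Ω, let M be a normal subgroup of G, and let ω ∈ Ω be a point whose stabilizer M_ω in M is nontrivial. Then the normalizer N_G(M_ω) of M_ω in G equals the point stabilizer G_ω, and consequently N_M(M_ω) = M_ω. -/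
/-!
`G_ω` normalizes `M_ω = M ⊓ G_ω` because `M` is normal, so by maximality `N_G(M_ω)` is `G_ω`
or `G`. In the latter case `M_ω` would be a normal subgroup inside a point stabilizer of a
transitive action, hence inside every point stabilizer, hence trivial by faithfulness.
-/

namespace Subgroup

variable {G : Type*} [Group G]

theorem le_normalizer_inf_of_normal (H K : Subgroup G) [H.Normal] :
    K ≤ normalizer ((H ⊓ K : Subgroup G) : Set G) :=
  (le_inf le_normalizer_of_normal K.le_normalizer).trans inf_normalizer_le_normalizer_inf

end Subgroup

namespace MulAction

variable {G Ω : Type*} [Group G] [MulAction G Ω]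

theorem le_stabilizer_smul_of_normal_le_stabilizer {N : Subgroup G} [N.Normal] {ω : Ω}
    (hN : N ≤ stabilizer G ω) (h : G) : N ≤ stabilizer G (h • ω) := by
  intro g hg
  have hconj : (h⁻¹ * g * h) • ω = ω := hN (by simpa using Subgroup.Normal.conj_mem' ‹_› g hg h)
  calc g • h • ω = h • (h⁻¹ * g * h) • ω := by simp [mul_smul]
    _ = h • ω := by rw [hconj]

theorem eq_bot_of_normal_le_stabilizer [FaithfulSMul G Ω] [IsPretransitive G Ω]
    {N : Subgroup G} [N.Normal] {ω : Ω} (hN : N ≤ stabilizer G ω) : N = ⊥ := by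
  refine (Subgroup.eq_bot_iff_forall N).mpr fun g hg ↦ eq_of_smul_eq_smul (α := Ω) fun ω' ↦ ?_
  obtain ⟨h, rfl⟩ := exists_smul_eq G ω ω'
  simpa using le_stabilizer_smul_of_normal_le_stabilizer hN h hg

end MulAction

theorem normalizer_pointStabilizer_of_primitive_general
    (G : Type*) [Group G] (Ω : Type*) [MulAction G Ω]
    [FaithfulSMul G Ω] [MulAction.IsPretransitive G Ω]
    (hprim : ∀ ω : Ω, IsCoatom (MulAction.stabilizer G ω))
    (M : Subgroup G) (hM : M.Normal)
    (ω : Ω) (hMω : M ⊓ MulAction.stabilizer G ω ≠ ⊥) :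
    Subgroup.normalizer ((M ⊓ MulAction.stabilizer G ω : Subgroup G) : Set G) = MulAction.stabilizer G ω ∧
      M ⊓ Subgroup.normalizer ((M ⊓ MulAction.stabilizer G ω : Subgroup G) : Set G) = M ⊓ MulAction.stabilizer G ω := by
  have hle := M.le_normalizer_inf_of_normal (MulAction.stabilizer G ω)
  have hN : Subgroup.normalizer ((M ⊓ MulAction.stabilizer G ω : Subgroup G) : Set G) =
      MulAction.stabilizer G ω := by
    refine ((hprim ω).le_iff.mp hle).resolve_left fun htop ↦ hMω ?_
    have hnormal : (M ⊓ MulAction.stabilizer G ω).Normal :=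
      Subgroup.normalizer_eq_top_iff.mp htop
    exact MulAction.eq_bot_of_normal_le_stabilizer inf_le_right
  exact ⟨hN, by rw [hN]⟩

/-- Let `G` be a finite group acting faithfully and primitively (transitively, with
every point stabilizer a maximal subgroup) on `Ω`, let `M` be a normal subgroup of
`G`, and let `ω` be a point whose stabilizer `M_ω = M ⊓ G_ω` is nontrivial. Then
`N_G(M_ω) = G_ω`, and consequently `N_M(M_ω) = M_ω`. -/
theorem normalizer_pointStabilizer_of_primitive
    (G : Type*) [Group G] [Finite G] (Ω : Type*) [MulAction G Ω]
    [FaithfulSMul G Ω] [MulAction.IsPretransitive G Ω]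
    (hprim : ∀ ω : Ω, IsCoatom (MulAction.stabilizer G ω))
    (M : Subgroup G) (hM : M.Normal)
    (ω : Ω) (hMω : M ⊓ MulAction.stabilizer G ω ≠ ⊥) :
    Subgroup.normalizer ((M ⊓ MulAction.stabilizer G ω : Subgroup G) : Set G) = MulAction.stabilizer G ω ∧
      M ⊓ Subgroup.normalizer ((M ⊓ MulAction.stabilizer G ω : Subgroup G) : Set G) = M ⊓ MulAction.stabilizer G ω :=
  normalizer_pointStabilizer_of_primitive_general G Ω hprim M hM ω hMω
end

section
/- Let f ≥ 2, let T = SL(2, GF(2^f)), and let the group T × T act on the set T by (a, b)·x = a x b⁻¹. Then this action is faithful and every irredundant base for T × T has length exactly 3; in particular T × T is an IBIS group of base size 3 in this action. -/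
/-!
The stabilizer of a point `x` consists of the pairs `(x b x⁻¹, b)`, and such a pair also fixes
`y` iff `b` commutes with `y⁻¹ x`. So the action is faithful iff the center is trivial, and two
points never form a base (take `b = y⁻¹ x`, or any `b ≠ 1` when `x = y`).
In `SL(2, K)` with `char K = 2` the center is trivial, so every `b ≠ 1` is a non-scalar matrix,
whose centralizer `{a + c b}` is abelian. Hence if `x₁ ≠ x₂` and some `(·, b)` with `b ≠ 1`
fixes `x₁, x₂, x₃`, any `b'` commuting with `x₂⁻¹ x₁` commutes with `b` and then with `x₃⁻¹ x₁`:
the stabilizers of `x₁, x₂` and of `x₁, x₂, x₃` agree, so an irredundant sequence has at most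
three points.
-/

/-- The action of `T × T` on `T` given by `(a, b) • x = a * x * b⁻¹`. -/
instance diagAction (T : Type*) [Group T] : MulAction (T × T) T where
  smul p x := p.1 * x * p.2⁻¹
  one_smul x := by
    show (1 : T) * x * (1 : T)⁻¹ = x
    group
  mul_smul p q x := by
    show (p.1 * q.1) * x * (p.2 * q.2)⁻¹ = p.1 * (q.1 * x * q.2⁻¹) * p.2⁻¹
    group

/-- The pointwise stabilizer of (the points in) a list. -/
def seqStabilizer (G : Type*) [Group G] {Ω : Type*} [MulAction G Ω] (l : List Ω) :
    Subgroup G :=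
  ⨅ ω ∈ l, MulAction.stabilizer G ω

/-- A sequence `(ω_1, …, ω_t)` is irredundant if each pointwise stabilizer of an
initial segment strictly contains the pointwise stabilizer of the next initial
segment. -/
def IsIrredundantSeq (G : Type*) [Group G] {Ω : Type*} [MulAction G Ω] (l : List Ω) :
    Prop :=
  ∀ i < l.length, seqStabilizer G (l.take (i + 1)) < seqStabilizer G (l.take i)

/-- An irredundant base is an irredundant sequence whose pointwise stabilizer is
trivial. -/
def IsIrredundantBase (G : Type*) [Group G] {Ω : Type*} [MulAction G Ω] (l : List Ω) :
    Prop :=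
  IsIrredundantSeq G l ∧ seqStabilizer G l = ⊥

section DiagonalAction

variable {T : Type*} [Group T]

theorem diagAction_smul_eq_self_iff {p : T × T} {x : T} : p • x = x ↔ p.1 = x * p.2 * x⁻¹ := by
  change p.1 * x * p.2⁻¹ = x ↔ _
  rw [mul_inv_eq_iff_eq_mul, eq_mul_inv_iff_mul_eq]

theorem diagAction_smul_eq_self_iff_commute {p : T × T} {x y : T} (hx : p • x = x) :
    p • y = y ↔ Commute p.2 (y⁻¹ * x) := by
  rw [diagAction_smul_eq_self_iff] at hx ⊢
  rw [hx, commute_iff_eq]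
  constructor <;> intro h
  · calc p.2 * (y⁻¹ * x) = y⁻¹ * (y * p.2 * y⁻¹) * x := by group
      _ = y⁻¹ * (x * p.2 * x⁻¹) * x := by rw [h]
      _ = y⁻¹ * x * p.2 := by group
  · calc x * p.2 * x⁻¹ = y * (y⁻¹ * x * p.2) * x⁻¹ := by group
      _ = y * (p.2 * (y⁻¹ * x)) * x⁻¹ := by rw [h]
      _ = y * p.2 * y⁻¹ := by group

theorem diagAction_faithfulSMul_of_center_eq_bot (hT : Subgroup.center T = ⊥) :
    FaithfulSMul (T × T) T := by
  suffices h : ∀ p : T × T, (∀ x : T, p • x = x) → p = 1 from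
    ⟨fun {p q} hpq => inv_mul_eq_one.mp (h _ fun x => by rw [mul_smul, ← hpq, inv_smul_smul])⟩
  intro p hp
  have hp1 : p.1 = p.2 := by simpa using diagAction_smul_eq_self_iff.mp (hp 1)
  have hp2 : p.2 ∈ Subgroup.center T := Subgroup.mem_center_iff.mpr fun x => by
    have hx := diagAction_smul_eq_self_iff.mp (hp x)
    rw [hp1, eq_mul_inv_iff_mul_eq] at hx
    exact hx.symm
  rw [hT, Subgroup.mem_bot] at hp2
  exact Prod.ext (hp1.trans hp2) hp2

end DiagonalAction

section PointwiseStabilizer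

variable {G Ω : Type*} [Group G] [MulAction G Ω]

theorem mem_seqStabilizer_iff {g : G} {l : List Ω} :
    g ∈ seqStabilizer G l ↔ ∀ x ∈ l, g • x = x := by
  simp [seqStabilizer, Subgroup.mem_iInf, MulAction.mem_stabilizer_iff]

theorem seqStabilizer_anti {l₁ l₂ : List Ω} (h : l₁ ⊆ l₂) :
    seqStabilizer G l₂ ≤ seqStabilizer G l₁ := fun _ hg =>
  mem_seqStabilizer_iff.mpr fun x hx => mem_seqStabilizer_iff.mp hg x (h hx)

end PointwiseStabilizer

-- Equivalently, the centralizer of every non-identity element is abelian.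
def IsCommTransitive (T : Type*) [Group T] : Prop :=
  ∀ ⦃a b c : T⦄, b ≠ 1 → Commute a b → Commute b c → Commute a c

section DiagonalActionBases

variable {T : Type*} [Group T]

theorem seqStabilizer_pair_ne_bot [Nontrivial T] (x y : T) :
    seqStabilizer (T × T) [x, y] ≠ ⊥ := by
  obtain ⟨g, hg, hgxy⟩ : ∃ g : T, g ≠ 1 ∧ Commute g (y⁻¹ * x) := by
    by_cases h : y⁻¹ * x = 1
    · obtain ⟨g, hg⟩ := exists_ne (1 : T)
      exact ⟨g, hg, h ▸ Commute.one_right g⟩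
    · exact ⟨_, h, Commute.refl _⟩
  have hx : ((x * g * x⁻¹, g) : T × T) • x = x := diagAction_smul_eq_self_iff.mpr rfl
  refine Subgroup.ne_bot_iff_exists_ne_one.mpr ⟨⟨(x * g * x⁻¹, g), ?_⟩, ?_⟩
  · simpa [mem_seqStabilizer_iff, hx] using (diagAction_smul_eq_self_iff_commute hx).mpr hgxy
  · simpa [Subtype.ext_iff, Prod.ext_iff] using hg

theorem three_le_length_of_seqStabilizer_eq_bot [Nontrivial T] {l : List T}
    (hl : seqStabilizer (T × T) l = ⊥) : 3 ≤ l.length := by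
  by_contra! hlen
  obtain ⟨x, y, hxy⟩ : ∃ x y : T, l ⊆ [x, y] := by
    match l, hlen with
    | [], _ => exact ⟨1, 1, List.nil_subset _⟩
    | [x], _ => exact ⟨x, x, by simp⟩
    | [x, y], _ => exact ⟨x, y, List.Subset.refl _⟩
  exact seqStabilizer_pair_ne_bot x y (eq_bot_iff.mpr (hl ▸ seqStabilizer_anti hxy))

theorem seqStabilizer_pair_le_triple (hT : IsCommTransitive T) {x y z : T} (hxy : x ≠ y)
    (hxyz : seqStabilizer (T × T) [x, y, z] ≠ ⊥) :
    seqStabilizer (T × T) [x, y] ≤ seqStabilizer (T × T) [x, y, z] := by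
  obtain ⟨⟨p, hp⟩, hp1⟩ := Subgroup.ne_bot_iff_exists_ne_one.mp hxyz
  simp only [mem_seqStabilizer_iff, List.forall_mem_cons, List.not_mem_nil, IsEmpty.forall_iff,
    implies_true, and_true] at hp
  obtain ⟨hpx, hpy, hpz⟩ := hp
  have hp2 : p.2 ≠ 1 := fun h => hp1 <| Subtype.ext <| Prod.ext
    (by simpa [h] using diagAction_smul_eq_self_iff.mp hpx) h
  have hyx : y⁻¹ * x ≠ 1 := fun h => hxy (inv_mul_eq_one.mp h).symm
  intro q hq
  simp only [mem_seqStabilizer_iff, List.forall_mem_cons, List.not_mem_nil, IsEmpty.forall_iff,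
    implies_true, and_true] at hq ⊢
  obtain ⟨hqx, hqy⟩ := hq
  have hqp : Commute q.2 p.2 := hT hyx ((diagAction_smul_eq_self_iff_commute hqx).mp hqy)
    ((diagAction_smul_eq_self_iff_commute hpx).mp hpy).symm
  exact ⟨hqx, hqy, (diagAction_smul_eq_self_iff_commute hqx).mpr
    (hT hp2 hqp ((diagAction_smul_eq_self_iff_commute hpx).mp hpz))⟩

theorem IsIrredundantSeq.length_le_three (hT : IsCommTransitive T) {l : List T}
    (hl : IsIrredundantSeq (T × T) l) : l.length ≤ 3 := by
  match l, hl with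
  | [], _ | [_], _ | [_, _], _ | [_, _, _], _ => simp
  | x :: y :: z :: w :: l, hl =>
    have h1 := hl 1 (by simp)
    have h2 := hl 2 (by simp)
    have h3 := hl 3 (by simp)
    simp only [List.take_succ_cons, List.take_zero] at h1 h2 h3
    have hxy : x ≠ y := by
      rintro rfl
      exact h1.not_ge (seqStabilizer_anti (by simp))
    exact absurd (seqStabilizer_pair_le_triple hT hxy (ne_bot_of_gt h3)) h2.not_ge

end DiagonalActionBases

namespace Matrix

variable {K : Type*} [Field K]

theorem exists_eq_scalar_add_smul_of_commute {g m : Matrix (Fin 2) (Fin 2) K}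
    (hg : g ∉ Set.range (scalar (Fin 2))) (hm : Commute m g) :
    ∃ a b : K, m = scalar (Fin 2) a + b • g := by
  have hmg : ∀ i j, m i 0 * g 0 j + m i 1 * g 1 j = g i 0 * m 0 j + g i 1 * m 1 j := fun i j => by
    simpa [mul_apply, Fin.sum_univ_two] using congr_fun₂ hm.eq i j
  -- `b` is the ratio of `m - m 0 0 • 1` to `g - g 0 0 • 1`, read off a nonzero entry of the latter.
  obtain ⟨b, h01, h10, h11⟩ : ∃ b : K, m 0 1 = b * g 0 1 ∧ m 1 0 = b * g 1 0 ∧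
      m 1 1 - m 0 0 = b * (g 1 1 - g 0 0) := by
    by_cases hq : g 0 1 = 0
    · by_cases hr : g 1 0 = 0
      · have hs : g 1 1 - g 0 0 ≠ 0 := fun hs => hg ⟨g 0 0, by
          ext i j; fin_cases i <;> fin_cases j <;> simp [hq, hr, sub_eq_zero.mp hs]⟩
        refine ⟨(m 1 1 - m 0 0) / (g 1 1 - g 0 0), ?_, ?_, ?_⟩ <;> field_simp
        · linear_combination hmg 0 1
        · linear_combination -hmg 1 0
      · refine ⟨m 1 0 / g 1 0, ?_, ?_, ?_⟩ <;> field_simp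
        · linear_combination hmg 0 0
        · linear_combination hmg 1 0
    · refine ⟨m 0 1 / g 0 1, ?_, ?_, ?_⟩ <;> field_simp
      · linear_combination -hmg 0 0
      · linear_combination -hmg 0 1
  refine ⟨m 0 0 - b * g 0 0, b, ?_⟩
  ext i j
  fin_cases i <;> fin_cases j <;> simp [h01, h10]
  linear_combination h11

theorem commute_of_commute_of_notMem_range_scalar_s9 {g m n : Matrix (Fin 2) (Fin 2) K}
    (hg : g ∉ Set.range (scalar (Fin 2))) (hm : Commute m g) (hn : Commute n g) :
    Commute m n := by
  obtain ⟨a, b, rfl⟩ := exists_eq_scalar_add_smul_of_commute hg hm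
  obtain ⟨c, d, rfl⟩ := exists_eq_scalar_add_smul_of_commute hg hn
  refine Commute.add_left (scalar_commute a (Commute.all a) _) (Commute.add_right ?_ ?_)
  · exact (scalar_commute c (Commute.all c) _).symm
  · exact ((Commute.refl g).smul_left b).smul_right d

namespace SpecialLinearGroup

instance {n R : Type*} [DecidableEq n] [Fintype n] [Nontrivial n] [CommRing R] [Nontrivial R] :
    Nontrivial (SpecialLinearGroup n R) := by
  obtain ⟨i, j, hij⟩ := exists_pair_ne n
  exact ⟨transvection hij 1, 1, fun h => by
    simpa [transvection_coe, hij] using congr_fun₂ (congrArg Subtype.val h) i j⟩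

variable [CharP K 2]

theorem center_fin_two_eq_bot_of_charTwo :
    Subgroup.center (SpecialLinearGroup (Fin 2) K) = ⊥ := by
  refine eq_bot_iff.mpr fun A hA => ?_
  obtain ⟨r, hr, hrA⟩ := mem_center_iff.mp hA
  have hr1 : r = 1 := CharTwo.sq_injective (by simpa using hr)
  exact Subgroup.mem_bot.mpr (Subtype.ext (by rw [← hrA, hr1]; simp))

theorem isCommTransitive_fin_two_of_charTwo :
    IsCommTransitive (SpecialLinearGroup (Fin 2) K) := by
  intro a b c hb hab hbc
  have hbK : (b : Matrix (Fin 2) (Fin 2) K) ∉ Set.range (scalar (Fin 2)) := by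
    rintro ⟨r, hr⟩
    have hb_center : b ∈ Subgroup.center _ :=
      mem_center_iff.mpr ⟨r, by simpa [← hr] using b.prop, hr⟩
    rw [center_fin_two_eq_bot_of_charTwo, Subgroup.mem_bot] at hb_center
    exact hb hb_center
  exact Subtype.ext (commute_of_commute_of_notMem_range_scalar_s9 hbK
    (congrArg Subtype.val hab.eq) (congrArg Subtype.val hbc.eq).symm).eq

end SpecialLinearGroup

end Matrix

theorem SL2_times_SL2_isIBIS_baseSize_three_general (f : ℕ) :
    FaithfulSMul
      (Matrix.SpecialLinearGroup (Fin 2) (GaloisField 2 f) ×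
        Matrix.SpecialLinearGroup (Fin 2) (GaloisField 2 f))
      (Matrix.SpecialLinearGroup (Fin 2) (GaloisField 2 f)) ∧
    ∀ l : List (Matrix.SpecialLinearGroup (Fin 2) (GaloisField 2 f)),
      IsIrredundantBase
        (Matrix.SpecialLinearGroup (Fin 2) (GaloisField 2 f) ×
          Matrix.SpecialLinearGroup (Fin 2) (GaloisField 2 f)) l →
      l.length = 3 :=
  ⟨diagAction_faithfulSMul_of_center_eq_bot
      Matrix.SpecialLinearGroup.center_fin_two_eq_bot_of_charTwo,
    fun _ hl => le_antisymm
      (hl.1.length_le_three Matrix.SpecialLinearGroup.isCommTransitive_fin_two_of_charTwo)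
      (three_le_length_of_seqStabilizer_eq_bot hl.2)⟩

/-- For `f ≥ 2` and `T = SL(2, GF(2^f))` (identified with `PSL(2, 2^f)`), the action
of `T × T` on `T` by `(a, b) • x = a * x * b⁻¹` is faithful and every irredundant
base has length exactly `3`; in particular `T × T` is an IBIS group of base size `3`
in this action. -/
theorem SL2_times_SL2_isIBIS_baseSize_three (f : ℕ) (hf : 2 ≤ f) :
    FaithfulSMul
      (Matrix.SpecialLinearGroup (Fin 2) (GaloisField 2 f) ×
        Matrix.SpecialLinearGroup (Fin 2) (GaloisField 2 f))
      (Matrix.SpecialLinearGroup (Fin 2) (GaloisField 2 f)) ∧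
    ∀ l : List (Matrix.SpecialLinearGroup (Fin 2) (GaloisField 2 f)),
      IsIrredundantBase
        (Matrix.SpecialLinearGroup (Fin 2) (GaloisField 2 f) ×
          Matrix.SpecialLinearGroup (Fin 2) (GaloisField 2 f)) l →
      l.length = 3 :=
  SL2_times_SL2_isIBIS_baseSize_three_general f
end

section
/- Let T be a finite non-abelian simple group and let the group T × T act on the set T by (a, b)·x = a x b⁻¹. Then this action is IBIS (all irredundant bases have the same length) if and only if T is a CT-group. -/
/-- `G` is IBIS if all irredundant bases have the same length. -/
def IsIBIS (G : Type*) [Group G] (Ω : Type*) [MulAction G Ω] : Prop :=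
  ∀ l₁ l₂ : List Ω, IsIrredundantBase G l₁ → IsIrredundantBase G l₂ →
    l₁.length = l₂.length

open MulAction Subgroup

section IrredundantSeq

variable {G Ω : Type*} [Group G] [MulAction G Ω]

theorem mem_seqStabilizer {l : List Ω} {g : G} :
    g ∈ seqStabilizer G l ↔ ∀ ω ∈ l, g • ω = ω := by
  simp [seqStabilizer]

@[simp]
theorem seqStabilizer_nil : seqStabilizer G ([] : List Ω) = ⊤ := by
  ext; simp [mem_seqStabilizer]

theorem seqStabilizer_append (l₁ l₂ : List Ω) :
    seqStabilizer G (l₁ ++ l₂) = seqStabilizer G l₁ ⊓ seqStabilizer G l₂ := by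
  ext; simp [mem_seqStabilizer, or_imp, forall_and]

theorem seqStabilizer_cons (ω : Ω) (l : List Ω) :
    seqStabilizer G (ω :: l) = stabilizer G ω ⊓ seqStabilizer G l := by
  ext; simp [mem_seqStabilizer]

@[simp]
theorem seqStabilizer_singleton (ω : Ω) : seqStabilizer G [ω] = stabilizer G ω := by
  simp [seqStabilizer_cons]

theorem isIrredundantSeq_nil : IsIrredundantSeq G ([] : List Ω) := by
  simp [IsIrredundantSeq]

theorem isIrredundantSeq_concat_iff {l : List Ω} {ω : Ω} :
    IsIrredundantSeq G (l ++ [ω]) ↔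
      IsIrredundantSeq G l ∧ seqStabilizer G l ⊓ stabilizer G ω < seqStabilizer G l := by
  unfold IsIrredundantSeq
  rw [List.length_append, List.length_singleton, Nat.forall_lt_succ_right,
    List.take_length_add_append, List.take_left' rfl, List.take_one, List.head?_cons,
    Option.toList_some, seqStabilizer_append, seqStabilizer_singleton]
  refine and_congr_left' (forall₂_congr fun i hi => ?_)
  rw [List.take_append_of_le_length hi, List.take_append_of_le_length hi.le]

theorem isIrredundantSeq_singleton {ω : Ω} :
    IsIrredundantSeq G [ω] ↔ stabilizer G ω < ⊤ := by
  simpa [isIrredundantSeq_nil] using isIrredundantSeq_concat_iff (G := G) (l := []) (ω := ω)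

theorem IsIrredundantSeq.append_of_seqStabilizer_eq {l l' e : List Ω}
    (hl : IsIrredundantSeq G (l ++ e)) (hl' : IsIrredundantSeq G l')
    (h : seqStabilizer G l = seqStabilizer G l') : IsIrredundantSeq G (l' ++ e) := by
  induction e using List.reverseRecOn with
  | nil => simpa using hl'
  | append_singleton e ω ih =>
    rw [← List.append_assoc, isIrredundantSeq_concat_iff] at hl ⊢
    rw [seqStabilizer_append, ← h, ← seqStabilizer_append]
    exact ⟨ih hl.1, hl.2⟩

theorem IsIrredundantSeq.exists_append_seqStabilizer_eq {l : List Ω}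
    (hl : IsIrredundantSeq G l) (m : List Ω) :
    ∃ e, IsIrredundantSeq G (l ++ e) ∧ seqStabilizer G (l ++ e) = seqStabilizer G (l ++ m) := by
  induction m using List.reverseRecOn with
  | nil => exact ⟨[], by simpa using hl, rfl⟩
  | append_singleton m ω ih =>
    obtain ⟨e, he, hS⟩ := ih
    have hSω : seqStabilizer G (l ++ (m ++ [ω])) =
        seqStabilizer G (l ++ e) ⊓ stabilizer G ω := by
      rw [← List.append_assoc, seqStabilizer_append, hS, seqStabilizer_singleton]
    by_cases hlt : seqStabilizer G (l ++ e) ⊓ stabilizer G ω < seqStabilizer G (l ++ e)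
    · refine ⟨e ++ [ω], ?_, ?_⟩
      · rw [← List.append_assoc, isIrredundantSeq_concat_iff]
        exact ⟨he, hlt⟩
      · rw [hSω, ← List.append_assoc, seqStabilizer_append, seqStabilizer_singleton]
    · exact ⟨e, he, by rw [hSω, inf_le_left.lt_or_eq.resolve_left hlt]⟩

theorem seqStabilizer_eq_bot_of_forall_mem [FaithfulSMul G Ω] {l : List Ω}
    (hl : ∀ ω, ω ∈ l) : seqStabilizer G l = ⊥ :=
  (eq_bot_iff_forall _).2 fun _ hg =>
    eq_of_smul_eq_smul fun ω => by rw [one_smul, mem_seqStabilizer.1 hg ω (hl ω)]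

theorem IsIrredundantSeq.exists_isIrredundantBase_append [Finite Ω] [FaithfulSMul G Ω]
    {l : List Ω} (hl : IsIrredundantSeq G l) : ∃ e, IsIrredundantBase G (l ++ e) := by
  obtain ⟨m, -, hm⟩ := Finite.exists_univ_list Ω
  obtain ⟨e, he, hS⟩ := hl.exists_append_seqStabilizer_eq m
  exact ⟨e, he, hS.trans (seqStabilizer_eq_bot_of_forall_mem fun ω => by simp [hm ω])⟩

namespace IsIBIS

variable [Finite Ω] [FaithfulSMul G Ω]

theorem length_eq_of_seqStabilizer_eq (hG : IsIBIS G Ω) {l l' : List Ω}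
    (hl : IsIrredundantSeq G l) (hl' : IsIrredundantSeq G l')
    (h : seqStabilizer G l = seqStabilizer G l') : l.length = l'.length := by
  obtain ⟨e, he, hbot⟩ := hl.exists_isIrredundantBase_append
  have hbot' : seqStabilizer G (l' ++ e) = ⊥ := by
    rwa [seqStabilizer_append, ← h, ← seqStabilizer_append]
  simpa using hG _ _ ⟨he, hbot⟩ ⟨he.append_of_seqStabilizer_eq hl' h, hbot'⟩

theorem seqStabilizer_eq_bot_of_length_le (hG : IsIBIS G Ω) {b l : List Ω}
    (hb : IsIrredundantBase G b) (hl : IsIrredundantSeq G l) (hlen : b.length ≤ l.length) :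
    seqStabilizer G l = ⊥ := by
  obtain ⟨e, he⟩ := hl.exists_isIrredundantBase_append
  have := hG _ _ hb he
  rw [List.length_append] at this
  obtain rfl : e = [] := List.eq_nil_of_length_eq_zero (by omega)
  simpa using he.2

theorem stabilizer_eq_of_le (hG : IsIBIS G Ω) {u v : Ω} (hv : stabilizer G v ≠ ⊤)
    (h : stabilizer G u ≤ stabilizer G v) : stabilizer G u = stabilizer G v := by
  by_contra hne
  have hu : IsIrredundantSeq G [u] :=
    isIrredundantSeq_singleton.2 (h.trans_lt (lt_top_iff_ne_top.2 hv))
  have hvu : IsIrredundantSeq G ([v] ++ [u]) :=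
    isIrredundantSeq_concat_iff.2 ⟨isIrredundantSeq_singleton.2 (lt_top_iff_ne_top.2 hv),
      by simpa [inf_eq_right.2 h] using h.lt_of_ne hne⟩
  have := hG.length_eq_of_seqStabilizer_eq hu hvu (by simp [seqStabilizer_cons, inf_eq_right.2 h])
  simp at this

theorem inf_stabilizer_eq_bot (hG : IsIBIS G Ω) {r r' : List Ω} {g t : Ω}
    (hr : IsIrredundantSeq G r) (hr' : IsIrredundantSeq G r') (hlen : r.length = r'.length)
    (hg : seqStabilizer G r ⊓ stabilizer G g = ⊥)
    (ht : seqStabilizer G r' ⊓ stabilizer G t < seqStabilizer G r') :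
    seqStabilizer G r' ⊓ stabilizer G t = ⊥ := by
  have hr't : IsIrredundantSeq G (r' ++ [t]) := isIrredundantSeq_concat_iff.2 ⟨hr', ht⟩
  rw [← seqStabilizer_singleton, ← seqStabilizer_append]
  by_cases hbot : seqStabilizer G r = ⊥
  · exact hG.seqStabilizer_eq_bot_of_length_le ⟨hr, hbot⟩ hr't (by simp [hlen])
  · refine hG.seqStabilizer_eq_bot_of_length_le (b := r ++ [g]) ⟨?_, ?_⟩ hr't (by simp [hlen])
    · exact isIrredundantSeq_concat_iff.2 ⟨hr, hg ▸ bot_lt_iff_ne_bot.2 hbot⟩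
    · rw [seqStabilizer_append, seqStabilizer_singleton, hg]

end IsIBIS

end IrredundantSeq

section PointStabilizer

variable {G Ω : Type*} [Group G] [MulAction G Ω]

theorem seqStabilizer_map_smul (g : G) (l : List Ω) :
    seqStabilizer G (l.map (g • ·)) = (seqStabilizer G l).map (MulAut.conj g).toMonoidHom := by
  ext h
  rw [mem_map_equiv, mem_seqStabilizer, mem_seqStabilizer, List.forall_mem_map]
  simp [mul_smul, inv_smul_eq_iff]

theorem isIrredundantBase_map_smul_iff (g : G) {l : List Ω} :
    IsIrredundantBase G (l.map (g • ·)) ↔ IsIrredundantBase G l := by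
  simp only [IsIrredundantBase, IsIrredundantSeq, List.length_map, ← List.map_take,
    seqStabilizer_map_smul,
    map_lt_map_iff_of_injective (f := (MulAut.conj g).toMonoidHom) (MulAut.conj g).injective,
    map_eq_bot_iff_of_injective (f := (MulAut.conj g).toMonoidHom) _ (MulAut.conj g).injective]

variable {H : Type*} [Group H] [MulAction H Ω] {φ : H →* G} {ω : Ω}

theorem seqStabilizer_cons_eq_map (hrange : φ.range = stabilizer G ω)
    (hφ : ∀ h (x : Ω), φ h • x = h • x) (l : List Ω) :
    seqStabilizer G (ω :: l) = (seqStabilizer H l).map φ := by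
  ext g
  rw [seqStabilizer_cons, mem_inf, ← hrange, MonoidHom.mem_range, mem_map]
  constructor
  · rintro ⟨⟨h, rfl⟩, hg⟩
    exact ⟨h, mem_seqStabilizer.2 fun x hx => hφ h x ▸ mem_seqStabilizer.1 hg x hx, rfl⟩
  · rintro ⟨h, hh, rfl⟩
    exact ⟨⟨h, rfl⟩, mem_seqStabilizer.2 fun x hx => (hφ h x).trans (mem_seqStabilizer.1 hh x hx)⟩

theorem isIrredundantBase_cons_iff (hinj : Function.Injective φ)
    (hrange : φ.range = stabilizer G ω) (hφ : ∀ h (x : Ω), φ h • x = h • x)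
    (hω : stabilizer G ω ≠ ⊤) {l : List Ω} :
    IsIrredundantBase G (ω :: l) ↔ IsIrredundantBase H l := by
  have hS := seqStabilizer_cons_eq_map hrange hφ
  unfold IsIrredundantBase IsIrredundantSeq
  rw [List.length_cons, Nat.forall_lt_succ_left, hS, map_eq_bot_iff_of_injective _ hinj]
  simp only [List.take_succ_cons, List.take_zero, hS, map_lt_map_iff_of_injective hinj,
    seqStabilizer_nil, ← MonoidHom.range_eq_map, hrange, hω.lt_top, true_and]

theorem isIBIS_iff_of_range_eq_stabilizer [IsPretransitive G Ω]
    (hinj : Function.Injective φ) (hrange : φ.range = stabilizer G ω)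
    (hφ : ∀ h (x : Ω), φ h • x = h • x) (hω : stabilizer G ω ≠ ⊤) :
    IsIBIS G Ω ↔ IsIBIS H Ω := by
  have hbase (l : List Ω) : IsIrredundantBase G (ω :: l) ↔ IsIrredundantBase H l :=
    isIrredundantBase_cons_iff hinj hrange hφ hω
  have hnil : ¬ IsIrredundantBase G ([] : List Ω) := fun hb => hω <| by
    rw [eq_top_iff, show (⊤ : Subgroup G) = ⊥ by simpa using hb.2]
    exact bot_le
  have hlength (b : List Ω) (hb : IsIrredundantBase G b) :
      ∃ l : List Ω, IsIrredundantBase H l ∧ b.length = l.length + 1 := by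
    obtain _ | ⟨ω', l⟩ := b
    · exact absurd hb hnil
    obtain ⟨g, hg⟩ := exists_smul_eq G ω' ω
    refine ⟨l.map (g • ·), (hbase _).1 ?_, by simp⟩
    simpa [hg] using (isIrredundantBase_map_smul_iff g).2 hb
  constructor
  · intro hG l₁ l₂ h₁ h₂
    simpa using hG _ _ ((hbase l₁).2 h₁) ((hbase l₂).2 h₂)
  · intro hH b₁ b₂ h₁ h₂
    obtain ⟨l₁, hl₁, e₁⟩ := hlength b₁ h₁
    obtain ⟨l₂, hl₂, e₂⟩ := hlength b₂ h₂
    rw [e₁, e₂, hH l₁ l₂ hl₁ hl₂]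

end PointStabilizer

section Centralizers

variable {G : Type*} [Group G]

theorem isCTGroup_iff_forall_isMulCommutative_centralizer :
    IsCTGroup G ↔ ∀ x : G, x ≠ 1 → IsMulCommutative (centralizer {x}) := by
  simp_rw [← le_centralizer_iff_isMulCommutative, SetLike.le_def, mem_centralizer_singleton_iff,
    mem_centralizer_iff, SetLike.mem_coe, mem_centralizer_singleton_iff]
  constructor
  · intro hCT x hx a ha b hb
    rcases eq_or_ne a 1 with rfl | ha1
    · simp
    rcases eq_or_ne b 1 with rfl | hb1
    · simp
    exact hCT b x a hb1 hx ha1 hb ha.symm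
  · intro h a b c _ hb _ hab hbc
    exact h b hb hbc.symm a hab

theorem IsCTGroup.centralizer_inf_eq_bot (hG : IsCTGroup G) {x y : G} (hx : x ≠ 1)
    (hxy : ¬ centralizer {x} ≤ centralizer {y}) : centralizer {x} ⊓ centralizer {y} = ⊥ := by
  refine (eq_bot_iff_forall _).2 fun q hq' => by_contra fun hq => hxy fun p hp => ?_
  obtain ⟨hqx, hqy⟩ := mem_inf.1 hq'
  rw [mem_centralizer_singleton_iff] at hp hqx hqy ⊢
  rcases eq_or_ne p 1 with rfl | hp1
  · simp
  rcases eq_or_ne y 1 with rfl | hy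
  · simp
  exact hG p q y hp1 hq hy (hG p x q hp1 hx hq hp hqx.symm) hqy

theorem orderOf_dvd_of_centralizer_ne
    (hNC : ∀ u v : G, v ≠ 1 → centralizer {u} ≤ centralizer {v} →
      centralizer {u} = centralizer {v})
    {x y : G} (hxy : Commute x y) (hy : y ≠ 1) (hne : centralizer {x} ≠ centralizer {y}) :
    orderOf x ∣ orderOf y := by
  -- If `x ^ n ≠ 1` for `n = orderOf y`, then `x`, `x ^ n = (x * y) ^ n` and `x * y` all have the
  -- same centralizer, which therefore also centralizes `y = x⁻¹ * (x * y)`.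
  refine orderOf_dvd_of_pow_eq_one (by_contra fun hxn => hne ?_)
  have hpow (z : G) : centralizer {z} ≤ centralizer {z ^ orderOf y} := fun w hw =>
    mem_centralizer_singleton_iff.2 (Commute.pow_right (mem_centralizer_singleton_iff.1 hw) _)
  have hxyn : (x * y) ^ orderOf y = x ^ orderOf y := by
    rw [hxy.mul_pow, pow_orderOf_eq_one, mul_one]
  have hx := hNC _ _ hxn (hpow x)
  have hxy' := (hNC _ _ hxn (hxyn ▸ hpow (x * y))).trans hx.symm
  refine hNC _ _ hy fun w hw => ?_
  have hwxy : w ∈ centralizer {x * y} := hxy' ▸ hw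
  rw [mem_centralizer_singleton_iff] at hw hwxy ⊢
  rw [← mul_assoc, hw, mul_assoc, mul_assoc] at hwxy
  exact mul_left_cancel hwxy

theorem exists_centralizer_ne_of_centralizer_eq_self
    (hNA : ∀ x : G, x ≠ 1 → ¬ IsMulCommutative (centralizer {x}))
    {B : Subgroup G} (hB : centralizer B = B) {x : G} (hx : x ≠ 1) :
    ∃ y ∈ B, y ≠ 1 ∧ centralizer {x} ≠ centralizer {y} := by
  by_contra! h
  have hle : centralizer {x} ≤ B := fun w hw => hB ▸ mem_centralizer_iff.2 fun y hy => by
    rcases eq_or_ne y 1 with rfl | hy1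
    · simp
    exact mem_centralizer_singleton_iff.1 (h y hy hy1 ▸ hw) |>.symm
  refine hNA x hx (le_centralizer_iff_isMulCommutative.1 ?_)
  calc centralizer {x} ≤ B := hle
    _ = centralizer B := hB.symm
    _ ≤ centralizer (centralizer {x}) := centralizer_le hle

theorem exists_prime_forall_orderOf_eq [Finite G]
    (hNC : ∀ u v : G, v ≠ 1 → centralizer {u} ≤ centralizer {v} →
      centralizer {u} = centralizer {v})
    (hNA : ∀ x : G, x ≠ 1 → ¬ IsMulCommutative (centralizer {x}))
    {B : Subgroup G} (hB : centralizer B = B) (hB1 : B ≠ ⊥) :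
    ∃ p : ℕ, p.Prime ∧ ∀ x ∈ B, x ≠ 1 → orderOf x = p := by
  obtain ⟨x₁, hx₁B, hx₁⟩ := B.bot_or_exists_ne_one.resolve_left hB1
  obtain ⟨y₁, hy₁B, hy₁, hne⟩ := exists_centralizer_ne_of_centralizer_eq_self hNA hB hx₁
  have horder {x y : G} (hxB : x ∈ B) (hyB : y ∈ B) (hx : x ≠ 1) (hy : y ≠ 1)
      (hne : centralizer {x} ≠ centralizer {y}) : orderOf x = orderOf y := by
    have hxy : Commute x y := mem_centralizer_iff.1 (hB.symm ▸ hyB : y ∈ centralizer B) x hxB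
    exact Nat.dvd_antisymm (orderOf_dvd_of_centralizer_ne hNC hxy hy hne)
      (orderOf_dvd_of_centralizer_ne hNC hxy.symm hx hne.symm)
  have hall : ∀ x ∈ B, x ≠ 1 → orderOf x = orderOf x₁ := by
    intro x hxB hx
    by_cases hc : centralizer {x} = centralizer {x₁}
    · rw [horder hxB hy₁B hx hy₁ (hc ▸ hne), horder hx₁B hy₁B hx₁ hy₁ hne]
    · exact horder hxB hx₁B hx hx₁ hc
  have hq := orderOf_pow_orderOf_div (orderOf_pos x₁).ne' (Nat.minFac_dvd (orderOf x₁))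
  have hprime := Nat.minFac_prime (mt orderOf_eq_one_iff.1 hx₁)
  refine ⟨orderOf x₁, ?_, hall⟩
  rwa [← hall _ (pow_mem hx₁B _) fun h => hprime.one_lt.ne' (by rw [← hq, h, orderOf_one]), hq]

theorem exists_centralizer_eq_self_of_pairwise_commute [Finite G] {s : Set G}
    (hs : ∀ x ∈ s, ∀ y ∈ s, x * y = y * x) :
    ∃ B : Subgroup G, s ⊆ B ∧ centralizer B = B := by
  have hcomm {t : Set G} (ht : ∀ x ∈ t, ∀ y ∈ t, x * y = y * x) :
      closure t ≤ centralizer (closure t) :=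
    le_centralizer_iff_isMulCommutative.2 (isMulCommutative_closure ht)
  obtain ⟨B, hsB, hB⟩ :=
    exists_maximal_ge_of_wellFoundedGT (fun H : Subgroup G => H ≤ centralizer H) _ (hcomm hs)
  refine ⟨B, subset_closure.trans hsB, le_antisymm (fun w hw => ?_) hB.prop⟩
  have hins : ∀ x ∈ insert w (B : Set G), ∀ y ∈ insert w (B : Set G), x * y = y * x := by
    rintro x (rfl | hx) y (rfl | hy)
    · rfl
    · exact (mem_centralizer_iff.1 hw y hy).symm
    · exact mem_centralizer_iff.1 hw x hx
    · exact mem_centralizer_iff.1 (hB.prop hy) x hx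
  have hle : B ≤ closure (insert w B) := fun b hb => subset_closure (Set.mem_insert_of_mem _ hb)
  exact hB.le_of_ge (hcomm hins) hle (subset_closure (Set.mem_insert _ _))

end Centralizers

theorem MulEquiv.mapSubgroup_eq_bot_iff {G H : Type*} [Group G] [Group H] (e : G ≃* H)
    {A : Subgroup G} : e.mapSubgroup A = ⊥ ↔ A = ⊥ := by
  rw [← e.mapSubgroup.map_bot, EmbeddingLike.apply_eq_iff_eq]

section ConjAct

open ConjAct

variable {G : Type*} [Group G]

theorem seqStabilizer_conjAct (l : List G) :
    seqStabilizer (ConjAct G) l =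
      (toConjAct : G ≃* ConjAct G).mapSubgroup (centralizer {x | x ∈ l}) := by
  ext g
  rw [mem_seqStabilizer, MulEquiv.coe_mapSubgroup, mem_map_equiv]
  simp only [ConjAct.smul_def, mul_inv_eq_iff_eq_mul, mem_centralizer_iff]
  exact forall₂_congr fun _ _ => eq_comm

theorem stabilizer_conjAct (x : G) :
    stabilizer (ConjAct G) x = (toConjAct : G ≃* ConjAct G).mapSubgroup (centralizer {x}) := by
  simpa using seqStabilizer_conjAct [x]

theorem stabilizer_conjAct_ne_top (hZ : center G = ⊥) {x : G} (hx : x ≠ 1) :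
    stabilizer (ConjAct G) x ≠ ⊤ := by
  rw [stabilizer_conjAct, ← map_top (toConjAct : G ≃* ConjAct G).mapSubgroup, Ne,
    EmbeddingLike.apply_eq_iff_eq, centralizer_eq_top_iff_subset, Set.singleton_subset_iff, hZ]
  exact hx

theorem faithfulSMul_conjAct (hZ : center G = ⊥) : FaithfulSMul (ConjAct G) G where
  eq_of_smul_eq_smul {g₁ g₂} h := by
    have hc : ofConjAct (g₂⁻¹ * g₁) ∈ center G := mem_center_iff.2 fun a => by
      have : (g₂⁻¹ * g₁) • a = a := by rw [mul_smul, inv_smul_eq_iff, h a]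
      rw [ConjAct.smul_def, mul_inv_eq_iff_eq_mul] at this
      exact this.symm
    rw [hZ, mem_bot, MulEquiv.map_eq_one_iff, inv_mul_eq_one] at hc
    exact hc.symm

theorem exists_isIrredundantSeq_conjAct {s : Set G} (hs : s.Finite) :
    ∃ r : List G, IsIrredundantSeq (ConjAct G) r ∧
      seqStabilizer (ConjAct G) r = (toConjAct : G ≃* ConjAct G).mapSubgroup (centralizer s) := by
  obtain ⟨r, hr, hS⟩ :=
    (isIrredundantSeq_nil (G := ConjAct G) (Ω := G)).exists_append_seqStabilizer_eq
      hs.toFinset.toList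
  exact ⟨r, hr, by simpa [seqStabilizer_conjAct] using hS⟩

theorem IsCTGroup.length_eq_two_of_isIrredundantBase [Nontrivial G] (hG : IsCTGroup G)
    {l : List G} (hl : IsIrredundantBase (ConjAct G) l) : l.length = 2 := by
  obtain ⟨hirr, hbot⟩ := hl
  have hne_one {x : G} {l : List G} (h : IsIrredundantSeq (ConjAct G) (x :: l)) : x ≠ 1 := by
    rintro rfl
    have h0 := h 0 (by simp)
    simp [lt_top_iff_ne_top, eq_top_iff, SetLike.le_def, mem_stabilizer_iff] at h0
  match l, hirr, hbot with
  | [], _, hbot =>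
    obtain ⟨a, ha⟩ := exists_ne (1 : G)
    exact (ha (toConjAct.injective ((eq_bot_iff_forall _).1 hbot (toConjAct a) (by simp)))).elim
  | [x], hirr, hbot =>
    rw [seqStabilizer_singleton, stabilizer_conjAct, MulEquiv.mapSubgroup_eq_bot_iff] at hbot
    exact (hne_one hirr ((eq_bot_iff_forall _).1 hbot x (mem_centralizer_singleton_iff.2 rfl))).elim
  | [_, _], _, _ => rfl
  | x :: y :: z :: l, hirr, _ =>
    have h1 := hirr 1 (by simp)
    have h2 := hirr 2 (by simp)
    simp only [List.take_succ_cons, List.take_zero, seqStabilizer_cons, seqStabilizer_nil,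
      inf_top_eq, stabilizer_conjAct, ← OrderIso.map_inf, OrderIso.lt_iff_lt] at h1 h2
    rw [← inf_assoc, hG.centralizer_inf_eq_bot (hne_one hirr) (inf_lt_left.1 h1)] at h2
    exact absurd h2 not_lt_bot

namespace IsIBIS

variable [Finite G]

theorem centralizer_eq_of_le (hZ : center G = ⊥) (hG : IsIBIS (ConjAct G) G) {u v : G}
    (hv : v ≠ 1) (h : centralizer {u} ≤ centralizer {v}) : centralizer {u} = centralizer {v} := by
  have := faithfulSMul_conjAct hZ
  have := hG.stabilizer_eq_of_le (u := u) (stabilizer_conjAct_ne_top hZ hv)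
    (by rwa [stabilizer_conjAct u, stabilizer_conjAct v, OrderIso.le_iff_le])
  rwa [stabilizer_conjAct u, stabilizer_conjAct v, EmbeddingLike.apply_eq_iff_eq] at this

theorem isMulCommutative_centralizer (hZ : center G = ⊥) (hG : IsIBIS (ConjAct G) G) {v : G}
    (hv : v ≠ 1) (hCv : IsMulCommutative (centralizer {v})) {x : G} (hx : x ≠ 1) :
    IsMulCommutative (centralizer {x}) := by
  have := faithfulSMul_conjAct hZ
  obtain ⟨g, hg⟩ : ∃ g, g ∉ centralizer {v} := by
    by_contra! h
    refine stabilizer_conjAct_ne_top hZ hv ?_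
    rw [stabilizer_conjAct, show centralizer {v} = ⊤ from eq_top_iff.2 fun g _ => h g,
      OrderIso.map_top]
  have hvg : centralizer {v} ⊓ centralizer {g} = ⊥ := by
    refine (eq_bot_iff_forall _).2 fun z hz => by_contra fun hz1 => hg ?_
    obtain ⟨hzv, hzg⟩ := mem_inf.1 hz
    have hle : centralizer {v} ≤ centralizer {z} := fun w hw =>
      mem_centralizer_singleton_iff.2 (mem_centralizer_iff.1 (le_centralizer _ hzv) w hw)
    rw [hG.centralizer_eq_of_le hZ hz1 hle]
    exact mem_centralizer_singleton_iff.2 (mem_centralizer_singleton_iff.1 hzg).symm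
  refine le_centralizer_iff_isMulCommutative.1 fun y hy => mem_centralizer_iff.2 fun w hw => ?_
  suffices hxy : centralizer {x} ≤ centralizer {y} from mem_centralizer_singleton_iff.1 (hxy hw)
  by_contra hxy
  have hbot := hG.inf_stabilizer_eq_bot (r := [v]) (r' := [x]) (g := g) (t := y)
    (isIrredundantSeq_singleton.2 (stabilizer_conjAct_ne_top hZ hv).lt_top)
    (isIrredundantSeq_singleton.2 (stabilizer_conjAct_ne_top hZ hx).lt_top) rfl
    (by rw [seqStabilizer_singleton, stabilizer_conjAct, stabilizer_conjAct, ← OrderIso.map_inf,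
      hvg, OrderIso.map_bot])
    (by rwa [seqStabilizer_singleton, stabilizer_conjAct, stabilizer_conjAct, ← OrderIso.map_inf,
      OrderIso.lt_iff_lt, inf_lt_left])
  rw [seqStabilizer_singleton, stabilizer_conjAct, stabilizer_conjAct, ← OrderIso.map_inf,
    MulEquiv.mapSubgroup_eq_bot_iff] at hbot
  exact hx ((eq_bot_iff_forall _).1 hbot x ⟨mem_centralizer_singleton_iff.2 rfl,
    mem_centralizer_singleton_iff.2 (mem_centralizer_singleton_iff.1 hy).symm⟩)

theorem exists_ne_one_commute (hZ : center G = ⊥) (hG : IsIBIS (ConjAct G) G)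
    (hNA : ∀ x : G, x ≠ 1 → ¬ IsMulCommutative (centralizer {x}))
    {B : Subgroup G} (hB : centralizer B = B) (hB1 : B ≠ ⊥) (g : G) :
    ∃ z ∈ B, z ≠ 1 ∧ Commute g z := by
  have := faithfulSMul_conjAct hZ
  by_contra! hg
  have hBg : B ⊓ centralizer {g} = ⊥ := (eq_bot_iff_forall _).2 fun z hz =>
    by_contra fun hz1 => hg z (mem_inf.1 hz).1 hz1
      (mem_centralizer_singleton_iff.1 (mem_inf.1 hz).2).symm
  obtain ⟨x, hxB, hx⟩ := B.bot_or_exists_ne_one.resolve_left hB1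
  obtain ⟨t, htx, htB⟩ : ∃ t ∈ centralizer {x}, t ∉ B := by
    by_contra! h
    refine hNA x hx (le_centralizer_iff_isMulCommutative.1 ?_)
    calc centralizer {x} ≤ B := h
      _ = centralizer B := hB.symm
      _ ≤ centralizer (centralizer {x}) := centralizer_le h
  have hBt : B ⊓ centralizer {t} < B := inf_lt_left.2 fun hle =>
    htB (hB ▸ mem_centralizer_iff.2 fun b hb => mem_centralizer_singleton_iff.1 (hle hb))
  obtain ⟨r, hr, hrB⟩ := exists_isIrredundantSeq_conjAct (s := (B : Set G)) (Set.toFinite _)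
  rw [hB] at hrB
  have hbot := hG.inf_stabilizer_eq_bot hr hr rfl (g := g) (t := t)
    (by rw [hrB, stabilizer_conjAct, ← OrderIso.map_inf, hBg, OrderIso.map_bot])
    (by rwa [hrB, stabilizer_conjAct, ← OrderIso.map_inf, OrderIso.lt_iff_lt])
  rw [hrB, stabilizer_conjAct, ← OrderIso.map_inf, MulEquiv.mapSubgroup_eq_bot_iff] at hbot
  exact hx ((eq_bot_iff_forall _).1 hbot x ⟨hxB,
    mem_centralizer_singleton_iff.2 (mem_centralizer_singleton_iff.1 htx).symm⟩)

theorem exists_isMulCommutative_centralizer [Nontrivial G] (hZ : center G = ⊥)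
    (hG : IsIBIS (ConjAct G) G) : ∃ v : G, v ≠ 1 ∧ IsMulCommutative (centralizer {v}) := by
  by_contra! hNA
  have hprime {B : Subgroup G} (hB : centralizer B = B) (hB1 : B ≠ ⊥) :=
    exists_prime_forall_orderOf_eq (fun _ _ hv => hG.centralizer_eq_of_le hZ hv) hNA hB hB1
  have hne_bot {B : Subgroup G} {x : G} (hx : x ≠ 1) (hxB : x ∈ B) : B ≠ ⊥ := fun h =>
    hx ((eq_bot_iff_forall _).1 h x hxB)
  obtain ⟨x₀, hx₀⟩ := exists_ne (1 : G)
  obtain ⟨B₀, hx₀B₀, hB₀⟩ := exists_centralizer_eq_self_of_pairwise_commute (s := {x₀}) (by simp)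
  have hB₀1 := hne_bot hx₀ (hx₀B₀ rfl)
  obtain ⟨p, hp, hpB₀⟩ := hprime hB₀ hB₀1
  have hall (g : G) (hg : g ≠ 1) : orderOf g = p := by
    obtain ⟨z, hzB₀, hz, hgz⟩ := hG.exists_ne_one_commute hZ hNA hB₀ hB₀1 g
    obtain ⟨B, hgzB, hB⟩ := exists_centralizer_eq_self_of_pairwise_commute (s := {g, z}) (by
      rintro a (rfl | rfl) b (rfl | rfl)
      exacts [rfl, hgz, hgz.symm, rfl])
    obtain ⟨q, -, hqB⟩ := hprime hB (hne_bot hz (hgzB (by simp)))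
    rw [hqB g (hgzB (by simp)) hg, ← hqB z (hgzB (by simp)) hz, hpB₀ z hzB₀ hz]
  have : Fact p.Prime := ⟨hp⟩
  have hPG : IsPGroup p G := fun g => ⟨1, by
    rcases eq_or_ne g 1 with rfl | hg
    · exact one_pow _
    · rw [pow_one, ← hall g hg, pow_orderOf_eq_one]⟩
  exact (nontrivial_iff_ne_bot _).1 hPG.center_nontrivial hZ

end IsIBIS

theorem isIBIS_conjAct_iff_isCTGroup [Finite G] [Nontrivial G] (hZ : center G = ⊥) :
    IsIBIS (ConjAct G) G ↔ IsCTGroup G := by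
  refine ⟨fun hG => ?_, fun hG l₁ l₂ h₁ h₂ => ?_⟩
  · obtain ⟨v, hv, hCv⟩ := hG.exists_isMulCommutative_centralizer hZ
    exact isCTGroup_iff_forall_isMulCommutative_centralizer.2 fun x hx =>
      hG.isMulCommutative_centralizer hZ hv hCv hx
  · rw [hG.length_eq_two_of_isIrredundantBase h₁, hG.length_eq_two_of_isIrredundantBase h₂]

end ConjAct

section DiagAction

variable {T : Type*} [Group T]

theorem diagAction_smul (p : T × T) (x : T) : p • x = p.1 * x * p.2⁻¹ := rfl

theorem isIBIS_prod_iff_isIBIS_conjAct [Nontrivial T] :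
    IsIBIS (T × T) T ↔ IsIBIS (ConjAct T) T := by
  have : IsPretransitive (T × T) T := ⟨fun x y => ⟨(y * x⁻¹, 1), by simp [diagAction_smul]⟩⟩
  refine isIBIS_iff_of_range_eq_stabilizer
    (φ := ConjAct.ofConjAct.toMonoidHom.prod ConjAct.ofConjAct.toMonoidHom) (ω := (1 : T))
    (fun a b h => ConjAct.ofConjAct.injective (congrArg Prod.fst h)) ?_
    (fun h x => (ConjAct.smul_def h x).symm) ?_
  · ext ⟨a, b⟩
    simp only [MonoidHom.mem_range, MonoidHom.prod_apply, Prod.mk.injEq, mem_stabilizer_iff,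
      diagAction_smul, mul_one, mul_inv_eq_one]
    exact ⟨fun ⟨x, hxa, hxb⟩ => hxa.symm.trans hxb, fun h => ⟨ConjAct.toConjAct a, by simp [h]⟩⟩
  · obtain ⟨t, ht⟩ := exists_ne (1 : T)
    refine fun h => ht ?_
    have : ((t, 1) : T × T) ∈ stabilizer (T × T) (1 : T) := h ▸ mem_top _
    simpa [mem_stabilizer_iff, diagAction_smul] using this

theorem IsSimpleGroup.center_eq_bot (hsimple : IsSimpleGroup T)
    (hnonabelian : ¬ ∀ a b : T, a * b = b * a) : center T = ⊥ :=
  (hsimple.eq_bot_or_eq_top_of_normal _ inferInstance).resolve_right fun h =>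
    hnonabelian fun a b => mem_center_iff.1 (h ▸ mem_top b) a

end DiagAction

/-- For a finite non-abelian simple group `T`, the action of `T × T` on `T` by
`(a, b) • x = a * x * b⁻¹` is IBIS if and only if `T` is a CT-group. -/
theorem diagAction_isIBIS_iff_isCTGroup
    (T : Type*) [Group T] [Finite T] (hsimple : IsSimpleGroup T)
    (hnonabelian : ¬ ∀ a b : T, a * b = b * a) :
    IsIBIS (T × T) T ↔ IsCTGroup T :=
  have := hsimple.toNontrivial
  isIBIS_prod_iff_isIBIS_conjAct.trans
    (isIBIS_conjAct_iff_isCTGroup (hsimple.center_eq_bot hnonabelian))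
end

section
/- Let f ≥ 3 and let T = SL(2, GF(2^f)). Then there exist two maximal subgroups K_1 and K_2 of T, each isomorphic to the dihedral group of order 2(2^f − 1), such that K_1 ∩ K_2 = 1. -/
/-!
In characteristic 2 the monomial matrices of `SL(2, F)` form the dihedral group generated by the
diagonal torus `Fˣ` and the involution `!![0, 1; 1, 0]`, of order `2 (|F| - 1)`. This subgroup is
maximal when `F` is finite: a strictly larger subgroup contains, after multiplying by the
involution or conjugating a suitable diagonal matrix, a nontrivial transvection; conjugation by
diagonal matrices scales its parameter by squares, which in characteristic 2 exhaust `F`; and the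
Bruhat decomposition then generates everything. For the second subgroup take the conjugate by the
transvection `!![1, 1; 0, 1]`: a monomial matrix whose conjugate is again monomial is the identity.
-/

open Matrix
open scoped MatrixGroups

namespace DihedralGroup

variable {G : Type*} [Group G] {n : ℕ}

def lift (ρ : Multiplicative (ZMod n) →* G) (s : G) (hs : s * s = 1)
    (hρs : ∀ x, ρ x * s = s * ρ x⁻¹) : DihedralGroup n →* G :=
  MonoidHom.mk' (fun
      | .r i => ρ (.ofAdd i)
      | .sr i => s * ρ (.ofAdd i)) <| by
    have hsub : ∀ i j : ZMod n, ρ (.ofAdd (j - i)) = (ρ (.ofAdd i))⁻¹ * ρ (.ofAdd j) := by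
      intro i j
      rw [sub_eq_neg_add, ofAdd_add, ofAdd_neg, map_mul, map_inv]
    rintro (i | i) (j | j)
    · simp only [r_mul_r, ofAdd_add, map_mul]
    · simp only [r_mul_sr, hsub, ← mul_assoc, hρs, map_inv]
    · simp only [sr_mul_r, ofAdd_add, map_mul, mul_assoc]
    · simp only [sr_mul_sr, hsub]
      rw [mul_assoc s, ← mul_assoc _ s, hρs, ← mul_assoc, ← mul_assoc, hs, one_mul, map_inv]

variable {ρ : Multiplicative (ZMod n) →* G} {s : G} {hs : s * s = 1}
  {hρs : ∀ x, ρ x * s = s * ρ x⁻¹}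

lemma lift_injective (hρ : Function.Injective ρ) (hsρ : s ∉ ρ.range) :
    Function.Injective (lift ρ s hs hρs) := by
  have key : ∀ i j : ZMod n, ρ (.ofAdd i) ≠ s * ρ (.ofAdd j) := fun i j h =>
    hsρ ⟨.ofAdd i / .ofAdd j, by rw [map_div, h, mul_div_cancel_right]⟩
  rintro (i | i) (j | j) h
  · exact congrArg _ (hρ h)
  · exact (key i j h).elim
  · exact (key j i h.symm).elim
  · exact congrArg _ (hρ (mul_left_cancel h))

lemma mem_range_lift {g : G} :
    g ∈ (lift ρ s hs hρs).range ↔ g ∈ ρ.range ∨ s * g ∈ ρ.range := by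
  constructor
  · rintro ⟨i | i, rfl⟩
    · exact Or.inl ⟨_, rfl⟩
    · exact Or.inr ⟨.ofAdd i, by simp [lift, ← mul_assoc, hs]⟩
  · rintro (⟨x, rfl⟩ | ⟨x, hx⟩)
    · exact ⟨.r x.toAdd, rfl⟩
    · exact ⟨.sr x.toAdd, by simp [lift, hx, ← mul_assoc, hs]⟩

end DihedralGroup

namespace SL2

variable {F : Type*} [Field F]

lemma det_eq_one (A : SL(2, F)) : A 0 0 * A 1 1 - A 0 1 * A 1 0 = 1 := by
  rw [← det_fin_two]; exact A.2

lemma mul_apply_fin_two (A B : SL(2, F)) (i j : Fin 2) :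
    (A * B) i j = A i 0 * B 0 j + A i 1 * B 1 j := by
  simp [Matrix.mul_apply, Fin.sum_univ_two]

noncomputable def diag : Fˣ →* SL(2, F) where
  toFun a := SpecialLinearGroup.diag2 a a.ne_zero
  map_one' := by ext i j; fin_cases i <;> fin_cases j <;> simp [SpecialLinearGroup.diag2_coe']
  map_mul' a b := Subtype.ext <| by simp [SpecialLinearGroup.diag2_coe', mul_comm]

@[simp] lemma coe_diag (a : Fˣ) :
    (diag a : Matrix (Fin 2) (Fin 2) F) = !![(a : F), 0; 0, (a : F)⁻¹] :=
  SpecialLinearGroup.diag2_coe' a.ne_zero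

abbrev transvection (x : F) : SL(2, F) := SpecialLinearGroup.transvection zero_ne_one x

@[simp] lemma coe_transvection (x : F) :
    (transvection x : Matrix (Fin 2) (Fin 2) F) = !![1, x; 0, 1] := by
  ext i j; fin_cases i <;> fin_cases j <;> simp [SpecialLinearGroup.transvection_coe]

lemma diag_mul_transvection_mul_inv (a : Fˣ) (x : F) :
    diag a * transvection x * (diag a)⁻¹ = transvection (a * a * x) := by
  ext i j; fin_cases i <;> fin_cases j <;> simp [mul_apply_fin_two]
  field_simp

def monomial : Subgroup SL(2, F) where
  carrier := {A | (A 0 1 = 0 ∧ A 1 0 = 0) ∨ (A 0 0 = 0 ∧ A 1 1 = 0)}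
  one_mem' := Or.inl ⟨by simp, by simp⟩
  mul_mem' := by
    rintro A B (⟨hA₁, hA₂⟩ | ⟨hA₁, hA₂⟩) (⟨hB₁, hB₂⟩ | ⟨hB₁, hB₂⟩) <;>
      simp [mul_apply_fin_two, hA₁, hA₂, hB₁, hB₂]
  inv_mem' := by
    rintro A (⟨h₁, h₂⟩ | ⟨h₁, h₂⟩) <;> simp [adjugate_fin_two, h₁, h₂]

lemma mem_monomial {A : SL(2, F)} :
    A ∈ monomial ↔ (A 0 1 = 0 ∧ A 1 0 = 0) ∨ (A 0 0 = 0 ∧ A 1 1 = 0) := Iff.rfl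

lemma diag_mem_monomial (a : Fˣ) : diag a ∈ monomial := Or.inl ⟨by simp, by simp⟩

lemma exists_diag_mul_eq_transvection {A : SL(2, F)} (h : A 1 0 = 0) :
    ∃ a : Fˣ, diag a * A = transvection (A 0 1 * A 1 1) := by
  have hdet : A 0 0 * A 1 1 = 1 := by simpa [h] using det_eq_one A
  have h11 : A 1 1 ≠ 0 := right_ne_zero_of_mul_eq_one hdet
  refine ⟨Units.mkOfMulEqOne (A 1 1) (A 0 0) (by rw [mul_comm, hdet]), ?_⟩
  ext i j; fin_cases i <;> fin_cases j <;> simp [mul_apply_fin_two, h, h11, mul_comm, hdet]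

lemma exists_transvection_mem_of_upper_mem {H : Subgroup SL(2, F)} (hK : monomial ≤ H)
    {A : SL(2, F)} (hA : A ∈ H) (h10 : A 1 0 = 0) (h01 : A 0 1 ≠ 0) :
    ∃ x ≠ 0, transvection x ∈ H := by
  have h11 : A 1 1 ≠ 0 := by
    rintro h11
    simpa [h10, h11] using det_eq_one A
  obtain ⟨a, ha⟩ := exists_diag_mul_eq_transvection h10
  exact ⟨_, mul_ne_zero h01 h11, ha ▸ mul_mem (hK (diag_mem_monomial a)) hA⟩

lemma diag_injective : Function.Injective (diag : Fˣ →* SL(2, F)) := fun a b h =>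
  Units.ext <| by simpa using congr_arg (fun A : SL(2, F) => A 0 0) h

lemma mem_range_diag {A : SL(2, F)} : A ∈ diag.range ↔ A 0 1 = 0 ∧ A 1 0 = 0 := by
  refine ⟨?_, fun ⟨h01, h10⟩ => ?_⟩
  · rintro ⟨a, rfl⟩
    simp
  · obtain ⟨a, ha⟩ := exists_diag_mul_eq_transvection h10
    rw [h01, zero_mul] at ha
    have ha' : diag a * A = 1 := ha.trans (SpecialLinearGroup.transvection_coeff_zero _)
    exact ⟨a⁻¹, by rw [map_inv, inv_eq_of_mul_eq_one_right ha']⟩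

lemma transvection_mul_mul_transvection_mem_monomial {A : SL(2, F)} (h : A 1 0 ≠ 0) :
    transvection (-(A 0 0 / A 1 0)) * A * transvection (-(A 1 1 / A 1 0)) ∈ monomial := by
  refine Or.inr ⟨?_, ?_⟩ <;> simp [mul_apply_fin_two] <;> field_simp <;> ring

lemma eq_top_of_monomial_le {H : Subgroup SL(2, F)} (hK : monomial ≤ H)
    (hT : ∀ x, transvection x ∈ H) : H = ⊤ := by
  rw [Subgroup.eq_top_iff']
  intro A
  by_cases h : A 1 0 = 0
  · obtain ⟨a, ha⟩ := exists_diag_mul_eq_transvection h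
    rw [← inv_mul_cancel_left (diag a) A, ha]
    exact mul_mem (inv_mem (hK (diag_mem_monomial a))) (hT _)
  · have hM := hK (transvection_mul_mul_transvection_mem_monomial h)
    have := mul_mem (mul_mem (hT (A 0 0 / A 1 0)) hM) (hT (A 1 1 / A 1 0))
    simpa [mul_assoc, ← SpecialLinearGroup.transvection_inv] using this

section CharTwo

variable [CharP F 2]

def swap : SL(2, F) := ⟨!![0, 1; 1, 0], by simp [det_fin_two_of, CharTwo.neg_eq]⟩

@[simp] lemma coe_swap : ((swap : SL(2, F)) : Matrix (Fin 2) (Fin 2) F) = !![0, 1; 1, 0] := rfl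

lemma swap_mul_swap : (swap : SL(2, F)) * swap = 1 := by
  ext i j; fin_cases i <;> fin_cases j <;> simp [mul_apply_fin_two]

lemma diag_mul_swap (a : Fˣ) : diag a * swap = swap * diag a⁻¹ := by
  ext i j; fin_cases i <;> fin_cases j <;> simp [mul_apply_fin_two]

lemma swap_mem_monomial : (swap : SL(2, F)) ∈ monomial := Or.inr ⟨rfl, rfl⟩

lemma forall_transvection_mem [Finite F] {H : Subgroup SL(2, F)} (hK : monomial ≤ H) {x : F}
    (hx : x ≠ 0) (hxH : transvection x ∈ H) (y : F) : transvection y ∈ H := by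
  by_cases hy : y = 0
  · simp [hy, SpecialLinearGroup.transvection_coeff_zero]
  obtain ⟨c, hc⟩ := isSquare_of_charTwo' (y / x)
  have hc0 : c ≠ 0 := by rintro rfl; simp_all
  have hcx : c * c * x = y := by rw [← hc]; field_simp
  have := diag_mul_transvection_mul_inv (Units.mk0 c hc0) x
  rw [Units.val_mk0, hcx] at this
  rw [← this]
  exact mul_mem (mul_mem (hK (diag_mem_monomial _)) hxH) (inv_mem (hK (diag_mem_monomial _)))

lemma exists_conj_diag_apply_zero_zero [Finite F] {A : SL(2, F)} (h00 : A 0 0 ≠ 0)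
    (h01 : A 0 1 ≠ 0) (h10 : A 1 0 ≠ 0) (h11 : A 1 1 ≠ 0) :
    ∃ a : Fˣ, (A * diag a * A⁻¹) 0 0 = 0 ∧ (A * diag a * A⁻¹) 1 1 ≠ 0 := by
  obtain ⟨c, hc⟩ := isSquare_of_charTwo' (A 0 1 * A 1 0 / (A 0 0 * A 1 1))
  have hc0 : c ≠ 0 := by rintro rfl; simp_all
  have hc' : c * c * (A 0 0 * A 1 1) = A 0 1 * A 1 0 := by rw [← hc]; field_simp
  have hdet := det_eq_one A
  -- The (1,1) entry times `c A₀₀ A₁₁` is `(A₀₀ A₁₁)² - (A₀₁ A₁₀)² = (det A)² = 1`.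
  refine ⟨Units.mk0 c hc0, ?_, ?_⟩
  · simp [mul_apply_fin_two, adjugate_fin_two]
    field_simp
    linear_combination hc'
  · have key : (A * diag (Units.mk0 c hc0) * A⁻¹) 1 1 * (c * (A 0 0 * A 1 1)) = 1 := by
      simp [mul_apply_fin_two, adjugate_fin_two]
      field_simp
      linear_combination (-(A 0 1 * A 1 0)) * hc' + (A 0 0 * A 1 1 - A 0 1 * A 1 0 + 1) * hdet +
        (A 0 1 * A 1 0 * (A 0 0 * A 1 1 - A 0 1 * A 1 0)) * CharTwo.two_eq_zero (R := F)
    exact left_ne_zero_of_mul_eq_one key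

lemma exists_upper_mem_of_not_mem_monomial [Finite F] {H : Subgroup SL(2, F)}
    (hK : monomial ≤ H) {A : SL(2, F)} (hA : A ∈ H) (hAK : A ∉ monomial) :
    ∃ B ∈ H, B 1 0 = 0 ∧ B 0 1 ≠ 0 := by
  have hw := hK swap_mem_monomial
  rw [mem_monomial, not_or, not_and_or, not_and_or] at hAK
  by_cases h10 : A 1 0 = 0
  · exact ⟨A, hA, h10, hAK.1.resolve_right (not_not.2 h10)⟩
  by_cases h11 : A 1 1 = 0
  · exact ⟨A * swap, mul_mem hA hw, by simp [mul_apply_fin_two, h11],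
      by simpa [mul_apply_fin_two] using hAK.2.resolve_right (not_not.2 h11)⟩
  by_cases h00 : A 0 0 = 0
  · exact ⟨swap * A, mul_mem hw hA, by simp [mul_apply_fin_two, h00],
      by simpa [mul_apply_fin_two] using h11⟩
  by_cases h01 : A 0 1 = 0
  · exact ⟨swap * A * swap, mul_mem (mul_mem hw hA) hw, by simp [mul_apply_fin_two, h01],
      by simpa [mul_apply_fin_two] using h10⟩
  obtain ⟨a, ha00, ha11⟩ := exists_conj_diag_apply_zero_zero h00 h01 h10 h11
  refine ⟨swap * (A * diag a * A⁻¹), ?_, by simpa [mul_apply_fin_two] using ha00,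
    by simpa [mul_apply_fin_two] using ha11⟩
  exact mul_mem hw (mul_mem (mul_mem hA (hK (diag_mem_monomial a))) (inv_mem hA))

lemma mem_monomial_iff_mem_range_diag {A : SL(2, F)} :
    A ∈ monomial ↔ A ∈ diag.range ∨ swap * A ∈ diag.range := by
  rw [mem_monomial, mem_range_diag, mem_range_diag]
  simp [mul_apply_fin_two, and_comm]

theorem nonempty_monomial_mulEquiv_dihedralGroup [Finite F] {n : ℕ} (hn : Nat.card Fˣ = n) :
    Nonempty ((monomial : Subgroup SL(2, F)) ≃* DihedralGroup n) := by
  subst hn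
  obtain ⟨e⟩ : Nonempty (Multiplicative (ZMod (Nat.card Fˣ)) ≃* Fˣ) :=
    ⟨zmodCyclicMulEquiv inferInstance⟩
  have hρ : (diag.comp e.toMonoidHom).range = diag.range := by
    rw [MonoidHom.range_comp, MonoidHom.range_eq_top_of_surjective _ e.surjective,
      ← MonoidHom.range_eq_map]
  let φ := DihedralGroup.lift (diag.comp e.toMonoidHom) swap swap_mul_swap
    (fun x => by simp [diag_mul_swap])
  have hφ : Function.Injective φ := by
    refine DihedralGroup.lift_injective (diag_injective.comp e.injective) ?_
    rw [hρ, mem_range_diag]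
    simp
  have hrange : φ.range = monomial := by
    ext A
    rw [DihedralGroup.mem_range_lift, hρ, mem_monomial_iff_mem_range_diag]
  exact ⟨((MonoidHom.ofInjective hφ).trans (MulEquiv.subgroupCongr hrange)).symm⟩

theorem monomial_isCoatom [Finite F] : IsCoatom (monomial : Subgroup SL(2, F)) := by
  refine ⟨fun h => ?_, fun H hH => ?_⟩
  · have : transvection (1 : F) ∈ monomial := h ▸ Subgroup.mem_top _
    simp [mem_monomial] at this
  obtain ⟨A, hAH, hAK⟩ := SetLike.exists_of_lt hH
  obtain ⟨B, hBH, hB10, hB01⟩ := exists_upper_mem_of_not_mem_monomial hH.le hAH hAK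
  obtain ⟨x, hx, hxH⟩ := exists_transvection_mem_of_upper_mem hH.le hBH hB10 hB01
  exact eq_top_of_monomial_le hH.le (forall_transvection_mem hH.le hx hxH)

lemma eq_one_of_mem_monomial_of_conj_transvection_mem {t : F} (ht : t ≠ 0) {A : SL(2, F)}
    (hA : A ∈ monomial) (hA' : transvection (-t) * A * transvection t ∈ monomial) : A = 1 := by
  have hdet := det_eq_one A
  rcases hA with ⟨h01, h10⟩ | ⟨h00, h11⟩
  · rcases hA' with ⟨c01, -⟩ | ⟨c00, -⟩
    · have h11 : A 1 1 = A 0 0 := by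
        have : t * (A 0 0 - A 1 1) = 0 := by
          simp [mul_apply_fin_two, h01, h10] at c01
          linear_combination c01
        exact (sub_eq_zero.1 ((mul_eq_zero.1 this).resolve_left ht)).symm
      have h00 : A 0 0 = 1 := CharTwo.sq_inj.1 <| by
        linear_combination hdet - A 0 0 * h11 + A 1 0 * h01
      ext i j; fin_cases i <;> fin_cases j <;> simp [h00, h01, h10, h11]
    · simp_all [mul_apply_fin_two]
  · have h10 : A 1 0 ≠ 0 := by rintro h; simp_all
    rcases hA' with ⟨-, c10⟩ | ⟨c00, -⟩ <;> simp_all [mul_apply_fin_two]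

lemma monomial_inf_conj_transvection {t : F} (ht : t ≠ 0) :
    monomial ⊓ MulEquiv.mapSubgroup (MulAut.conj (transvection t)) monomial = ⊥ := by
  refine eq_bot_iff.2 fun A hA => ?_
  rw [Subgroup.mem_inf, MulEquiv.coe_mapSubgroup, Subgroup.mem_map_equiv,
    MulAut.conj_symm_apply, SpecialLinearGroup.transvection_inv] at hA
  exact eq_one_of_mem_monomial_of_conj_transvection_mem ht hA.1 hA.2

end CharTwo

end SL2

/-- For `f ≥ 3` and `T = SL(2, GF(2^f))` (identified with `PSL(2, 2^f)`), there exist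
two maximal subgroups `K₁, K₂` of `T`, each isomorphic to the dihedral group of
order `2(2^f − 1)`, intersecting trivially. -/
theorem exists_disjoint_maximal_dihedral_subgroups (f : ℕ) (hf : 3 ≤ f) :
    ∃ K₁ K₂ : Subgroup (Matrix.SpecialLinearGroup (Fin 2) (GaloisField 2 f)),
      IsCoatom K₁ ∧ IsCoatom K₂ ∧
      Nonempty (K₁ ≃* DihedralGroup (2 ^ f - 1)) ∧
      Nonempty (K₂ ≃* DihedralGroup (2 ^ f - 1)) ∧
      K₁ ⊓ K₂ = ⊥ := by
  have hcard : Nat.card (GaloisField 2 f)ˣ = 2 ^ f - 1 := by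
    rw [Nat.card_units, GaloisField.card 2 f (by omega)]
  let c := MulEquiv.mapSubgroup (MulAut.conj (SL2.transvection (1 : GaloisField 2 f)))
  obtain ⟨e⟩ := SL2.nonempty_monomial_mulEquiv_dihedralGroup hcard
  exact ⟨SL2.monomial, c SL2.monomial, SL2.monomial_isCoatom,
    (c.isCoatom_iff _).2 SL2.monomial_isCoatom, ⟨e⟩, ⟨(MulEquiv.subgroupMap _ _).symm.trans e⟩,
    SL2.monomial_inf_conj_transvection one_ne_zero⟩
end

section
/- Let f ≥ 3 and let T = SL(2, GF(2^f)). Then there exist two involutions z_1, z_2 ∈ T such that the product z_1 z_2 has order 2^f + 1 (so that ⟨z_1, z_2⟩ is a dihedral group of order 2(2^f + 1)) and the intersection of centralizers C_T(z_1) ∩ C_T(z_2) is trivial. -/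
open Matrix Polynomial

section Aux
variable {K Ω : Type*} [Field K] [CharP K 2] [Field Ω]

theorem aux_main (φ : K →+* Ω) (n : ℕ) (hn : 2 < n) (α : Ω) (hα : IsPrimitiveRoot α n)
    (t : K) (ht : φ t = α + α⁻¹) :
    ∃ z₁ z₂ : Matrix.SpecialLinearGroup (Fin 2) K,
      orderOf z₁ = 2 ∧ orderOf z₂ = 2 ∧
      orderOf (z₁ * z₂) = n ∧
      Subgroup.centralizer {z₁} ⊓ Subgroup.centralizer {z₂} = ⊥ := by
  have hφ : Function.Injective φ := φ.injective
  haveI : CharP Ω 2 := charP_of_injective_ringHom hφ 2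
  have hα0 : α ≠ 0 := fun h => by
    have := hα.pow_eq_one; rw [h] at this
    simp [zero_pow (by omega : n ≠ 0)] at this
  have hinv : α⁻¹ * α = 1 := inv_mul_cancel₀ hα0
  have hαsq : α⁻¹ ≠ α := by
    intro h
    have h2 : α ^ 2 = 1 := by
      rw [pow_two]; nth_rewrite 1 [← h]; exact hinv
    have := Nat.le_of_dvd (by norm_num) (hα.dvd_of_pow_eq_one 2 h2)
    omega
  have hT : α + α⁻¹ ≠ 0 := by
    intro h
    apply hαsq
    have := eq_neg_of_add_eq_zero_left h
    rw [CharTwo.neg_eq] at this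
    exact this.symm
  have ht0 : t ≠ 0 := by
    intro h; rw [h, map_zero] at ht; exact hT ht.symm
  have detz : Matrix.det !![(1:K),t;0,1] = 1 := by simp [det_fin_two_of]
  have detg : Matrix.det !![(0:K),1;1,t] = 1 := by
    rw [det_fin_two_of]; ring_nf; simp [CharTwo.neg_eq]
  set z₁ : Matrix.SpecialLinearGroup (Fin 2) K := ⟨!![1,t;0,1], detz⟩ with hz₁def
  set g : Matrix.SpecialLinearGroup (Fin 2) K := ⟨!![0,1;1,t], detg⟩ with hgdef
  set z₂ : Matrix.SpecialLinearGroup (Fin 2) K := z₁ * g with hz₂def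
  have h2K : (2 : K) = 0 := CharTwo.two_eq_zero
  have hz₁sq : z₁ * z₁ = 1 := by
    apply Subtype.ext
    show (!![(1:K),t;0,1] : Matrix (Fin 2) (Fin 2) K) * !![1,t;0,1] = 1
    rw [mul_fin_two, one_fin_two]
    ext i j
    fin_cases i <;> fin_cases j <;> simp <;> ring_nf <;> simp [h2K]
  have hz₁ne : z₁ ≠ 1 := by
    intro h
    have h2 := congrFun (congrFun (congrArg Subtype.val h) 0) 1
    simp [hz₁def, Matrix.SpecialLinearGroup.coe_one] at h2
    exact ht0 h2
  have hz₂coe : (z₂ : Matrix (Fin 2) (Fin 2) K) = !![t, 1 + t*t; 1, t] := by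
    show (!![(1:K),t;0,1] : Matrix (Fin 2) (Fin 2) K) * !![0,1;1,t] = _
    rw [mul_fin_two]
    ext i j
    fin_cases i <;> fin_cases j <;> simp <;> ring
  have hz₂sq : z₂ * z₂ = 1 := by
    apply Subtype.ext
    show (z₂ : Matrix (Fin 2) (Fin 2) K) * z₂ = 1
    rw [hz₂coe, mul_fin_two, one_fin_two]
    ext i j
    fin_cases i <;> fin_cases j <;> simp <;> ring_nf <;> simp [h2K] <;> ring_nf <;> simp [h2K]
  have hz₂ne : z₂ ≠ 1 := by
    intro h
    have h2 := congrFun (congrFun (congrArg Subtype.val h) 1) 0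
    rw [hz₂coe] at h2
    simp [Matrix.SpecialLinearGroup.coe_one] at h2
  have hprod : z₁ * z₂ = g := by
    rw [hz₂def, ← mul_assoc, hz₁sq, one_mul]
  -- order of g
  set T := α + α⁻¹ with hTdef
  set G : Matrix (Fin 2) (Fin 2) Ω := !![0,1;1,T] with hG
  set P : Matrix (Fin 2) (Fin 2) Ω := !![1,1;α,α⁻¹] with hP
  set D : Matrix (Fin 2) (Fin 2) Ω := !![α,0;0,α⁻¹] with hD
  have h2Ω : (2 : Ω) = 0 := CharTwo.two_eq_zero
  have hkey : T * α = α * α + 1 := by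
    rw [hTdef]; linear_combination hinv
  have hkey' : T * α⁻¹ = α⁻¹ * α⁻¹ + 1 := by
    rw [hTdef]; linear_combination hinv
  have hGP : G * P = P * D := by
    rw [hG, hP, hD, mul_fin_two, mul_fin_two]
    ext i j
    fin_cases i <;> fin_cases j <;> simp <;> (first | ring1 | linear_combination hinv + h2Ω)
  have hdetP : P.det ≠ 0 := by
    rw [hP, det_fin_two_of]
    intro h
    apply hT
    rw [hTdef]
    linear_combination h + α * h2Ω
  have hPunit : IsUnit P := (Matrix.isUnit_iff_isUnit_det P).2 (isUnit_iff_ne_zero.2 hdetP)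
  have hpow : ∀ m : ℕ, G ^ m * P = P * D ^ m := by
    intro m
    induction m with
    | zero => simp
    | succ m ih =>
      rw [pow_succ', pow_succ', mul_assoc, ih, ← mul_assoc, hGP, mul_assoc]
  have hDpow : ∀ m : ℕ, D ^ m = !![α ^ m, 0; 0, (α⁻¹) ^ m] := by
    intro m
    induction m with
    | zero => simp [one_fin_two]
    | succ m ih =>
      rw [pow_succ, ih, hD, mul_fin_two, pow_succ, pow_succ]
      ext i j
      fin_cases i <;> fin_cases j <;> simp
  have hGm : ∀ m : ℕ, (G ^ m = 1 ↔ α ^ m = 1) := by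
    intro m
    constructor
    · intro h
      have h1 : P * D ^ m = P * 1 := by rw [← hpow, h, one_mul, mul_one]
      have h2 : D ^ m = 1 := hPunit.mul_left_cancel h1
      rw [hDpow] at h2
      have h3 := congrFun (congrFun h2 0) 0
      simpa [one_fin_two] using h3
    · intro h
      have h2 : D ^ m = 1 := by
        rw [hDpow, inv_pow, h, inv_one, one_fin_two]
      have h3 : G ^ m * P = 1 * P := by rw [hpow, h2, one_mul, mul_one]
      exact hPunit.mul_right_cancel h3
  have hφG : (↑g : Matrix (Fin 2) (Fin 2) K).map φ = G := by
    show (!![(0:K),1;1,t] : Matrix (Fin 2) (Fin 2) K).map φ = G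
    rw [hG]
    ext i j
    fin_cases i <;> fin_cases j <;> simp [Matrix.map_apply, ht]
  have hmapinj : Function.Injective
      (fun M : Matrix (Fin 2) (Fin 2) K => M.map φ) := by
    intro M N h
    ext i j
    exact hφ (congrFun (congrFun h i) j)
  have hmapone : (1 : Matrix (Fin 2) (Fin 2) K).map φ = 1 :=
    Matrix.map_one φ φ.map_zero φ.map_one
  have hmappow : ∀ m : ℕ, ((↑g : Matrix (Fin 2) (Fin 2) K) ^ m).map φ = G ^ m := by
    intro m
    induction m with
    | zero => simpa using hmapone
    | succ m ih =>
      rw [pow_succ, pow_succ, Matrix.map_mul, ih, hφG]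
  have hkeyiff : ∀ m : ℕ, (g ^ m = 1 ↔ α ^ m = 1) := by
    intro m
    rw [← hGm m]
    constructor
    · intro h
      have h1 : (↑(g ^ m) : Matrix (Fin 2) (Fin 2) K) = 1 := by
        rw [h]; exact Matrix.SpecialLinearGroup.coe_one
      rw [Matrix.SpecialLinearGroup.coe_pow] at h1
      have h2 := congrArg (fun M : Matrix (Fin 2) (Fin 2) K => M.map φ) h1
      rw [hmappow, hmapone] at h2
      exact h2
    · intro h
      apply Subtype.ext
      rw [Matrix.SpecialLinearGroup.coe_pow, Matrix.SpecialLinearGroup.coe_one]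
      apply hmapinj
      simp only
      rw [hmappow, hmapone]
      exact h
  have hordg : orderOf g = n := by
    have h1 : g ^ n = 1 := (hkeyiff n).2 hα.pow_eq_one
    have h2 : α ^ orderOf g = 1 := (hkeyiff _).1 (pow_orderOf_eq_one g)
    exact Nat.dvd_antisymm (orderOf_dvd_of_pow_eq_one h1) (hα.dvd_of_pow_eq_one _ h2)
  refine ⟨z₁, z₂, ?_, ?_, ?_, ?_⟩
  · exact orderOf_eq_prime (by rw [pow_two]; exact hz₁sq) hz₁ne
  · exact orderOf_eq_prime (by rw [pow_two]; exact hz₂sq) hz₂ne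
  · rw [hprod]; exact hordg
  · ext x
    simp only [Subgroup.mem_inf, Subgroup.mem_centralizer_singleton_iff, Subgroup.mem_bot]
    constructor
    · rintro ⟨h1, h2⟩
      have hxg : x * g = g * x := by
        rw [← hprod, ← mul_assoc, h1, mul_assoc, h2]; exact (mul_assoc z₁ z₂ x).symm
      set a := (↑x : Matrix (Fin 2) (Fin 2) K) 0 0 with ha
      set b := (↑x : Matrix (Fin 2) (Fin 2) K) 0 1 with hb
      set c := (↑x : Matrix (Fin 2) (Fin 2) K) 1 0 with hc
      set d := (↑x : Matrix (Fin 2) (Fin 2) K) 1 1 with hd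
      have hMeta : (↑x : Matrix (Fin 2) (Fin 2) K) = !![a,b;c,d] := eta_fin_two _
      have e1 : !![a,b;c,d] * !![1,t;0,1] = !![1,t;0,1] * !![a,b;c,d] := by
        have h3 := congrArg Subtype.val h1
        rw [Matrix.SpecialLinearGroup.coe_mul, Matrix.SpecialLinearGroup.coe_mul,
          hMeta] at h3
        exact h3
      have e2 : !![a,b;c,d] * !![0,1;1,t] = !![0,1;1,t] * !![a,b;c,d] := by
        have h3 := congrArg Subtype.val hxg
        rw [Matrix.SpecialLinearGroup.coe_mul, Matrix.SpecialLinearGroup.coe_mul,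
          hMeta] at h3
        exact h3
      rw [mul_fin_two, mul_fin_two] at e1 e2
      have q1 : a * 1 + b * 0 = 1 * a + t * c := by
        simpa using congrFun (congrFun e1 0) 0
      have hc0 : c = 0 := by
        have htc : t * c = 0 := by linear_combination -q1
        exact (mul_eq_zero.mp htc).resolve_left ht0
      have q2 : a * 0 + b * 1 = 0 * a + 1 * c := by
        simpa using congrFun (congrFun e2 0) 0
      have hb0 : b = 0 := by linear_combination q2 + hc0
      have q3 : a * 1 + b * t = 0 * b + 1 * d := by
        simpa using congrFun (congrFun e2 0) 1
      have hda : d = a := by linear_combination -q3 + t * hb0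
      have hdet : a * d - b * c = 1 := by
        have := x.2
        rw [hMeta, det_fin_two_of] at this
        exact this
      have ha1 : a = 1 := by
        have hsq : (a - 1) * (a - 1) = 0 := by
          linear_combination hdet - a * hda + b * hc0 + (1 - a) * h2K
        have := mul_self_eq_zero.mp hsq
        linear_combination this
      apply Subtype.ext
      rw [hMeta, Matrix.SpecialLinearGroup.coe_one, one_fin_two, ha1, hb0, hc0, hda, ha1]
    · rintro rfl
      exact ⟨by simp, by simp⟩
end Aux

/-- For `f ≥ 3` and `T = SL(2, GF(2^f))` (identified with `PSL(2, 2^f)`), there exist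
two involutions `z₁, z₂` whose product has order `2^f + 1` (so they generate a
dihedral group of order `2(2^f + 1)`) and whose centralizers intersect trivially. -/
theorem exists_involutions_dihedral_trivial_centralizers (f : ℕ) (hf : 3 ≤ f) :
    ∃ z₁ z₂ : Matrix.SpecialLinearGroup (Fin 2) (GaloisField 2 f),
      orderOf z₁ = 2 ∧ orderOf z₂ = 2 ∧
      orderOf (z₁ * z₂) = 2 ^ f + 1 ∧
      Subgroup.centralizer {z₁} ⊓ Subgroup.centralizer {z₂} = ⊥ := by
  classical
  have hf0 : f ≠ 0 := by omega
  set K := GaloisField 2 f with hK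
  let Ω := AlgebraicClosure K
  haveI : CharP Ω 2 := charP_of_injective_ringHom (algebraMap K Ω).injective 2
  have h2Ω : (2 : Ω) = 0 := by exact_mod_cast CharP.cast_eq_zero Ω 2
  have hcast : ((2 ^ f + 1 : ℕ) : Ω) = 1 := by
    push_cast
    rw [h2Ω, zero_pow hf0, zero_add]
  haveI : NeZero ((2 ^ f + 1 : ℕ) : Ω) := ⟨by rw [hcast]; exact one_ne_zero⟩
  obtain ⟨α, hα⟩ := HasEnoughRootsOfUnity.exists_primitiveRoot Ω (2 ^ f + 1)
  have hn : 2 < 2 ^ f + 1 := by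
    have := Nat.one_lt_two_pow_iff.mpr hf0
    omega
  haveI : Fintype K := Fintype.ofFinite K
  have hcard : Fintype.card K = 2 ^ f := by
    rw [← Nat.card_eq_fintype_card]
    exact GaloisField.card 2 f hf0
  have hαq : α ^ (2 ^ f) = α⁻¹ := by
    apply eq_inv_of_mul_eq_one_left
    rw [← pow_succ]
    exact hα.pow_eq_one
  have hTfix : (α + α⁻¹) ^ (2 ^ f) = α + α⁻¹ := by
    rw [add_pow_char_pow, hαq, inv_pow, hαq, inv_inv, add_comm]
  have h12 : (1 : ℕ) < 2 ^ f := Nat.one_lt_two_pow_iff.mpr hf0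
  set poly := ((X : Polynomial Ω) ^ (2 ^ f) - X) with hpoly
  have hpne : poly ≠ 0 := FiniteField.X_pow_card_sub_X_ne_zero Ω h12
  have hdeg : poly.natDegree = 2 ^ f := FiniteField.X_pow_card_sub_X_natDegree_eq Ω h12
  set S : Finset Ω := Finset.univ.image (algebraMap K Ω) with hS
  have hSsub : S ⊆ poly.roots.toFinset := by
    intro y hy
    obtain ⟨u, -, rfl⟩ := Finset.mem_image.mp hy
    rw [Multiset.mem_toFinset, Polynomial.mem_roots hpne]
    have hu : u ^ (2 ^ f) = u := by
      rw [← hcard]; exact FiniteField.pow_card u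
    simp only [Polynomial.IsRoot, hpoly, Polynomial.eval_sub, Polynomial.eval_pow,
      Polynomial.eval_X, ← map_pow, hu, sub_self]
  have hcardS : S.card = 2 ^ f := by
    rw [hS, Finset.card_image_of_injective _ (algebraMap K Ω).injective,
      Finset.card_univ, hcard]
  have hcardR : poly.roots.toFinset.card ≤ 2 ^ f :=
    le_trans (Multiset.toFinset_card_le _) (le_trans (Polynomial.card_roots' poly) (by rw [hdeg]))
  have hSeq : S = poly.roots.toFinset :=
    Finset.eq_of_subset_of_card_le hSsub (by rw [hcardS]; exact hcardR)
  have hTmem : (α + α⁻¹) ∈ poly.roots.toFinset := by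
    rw [Multiset.mem_toFinset, Polynomial.mem_roots hpne]
    simp only [Polynomial.IsRoot, hpoly, Polynomial.eval_sub, Polynomial.eval_pow,
      Polynomial.eval_X, hTfix, sub_self]
  rw [← hSeq] at hTmem
  obtain ⟨t, -, htt⟩ := Finset.mem_image.mp hTmem
  exact aux_main (algebraMap K Ω) (2 ^ f + 1) hn α hα t htt
end
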